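/- arXiv:1712.08887 — 9 statements merged into one kernel-verified Lean document; each statement's English description precedes it below -/
import Mathlib

section
/- With Ω = σ_ε^{-2} I + σ_η^{-2} Λ (where Λ is as in the AR(1) state space model, σ_ε, σ_η > 0, |φ| < 1), the rate of convergence of the EM algorithm for the unknown location μ under the partially noncentered parametrization with working parameter vector w is τ(w)^{-1} ρ(w)^T Ω^{-1} ρ(w), where ρ(w) = σ_ε^{-2} 1 - Ω(1-w) and τ(w) = σ_ε^{-2} w^T w + σ_η^{-2}(1-w)^T Λ (1-w); this rate is nonnegative and equals zero when w = w^opt := 1 - σ_ε^{-2} Ω^{-1} 1. -/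
/-!
For `|φ| ≤ 1` the matrix `Λ` is weakly diagonally dominant: the off-diagonal moduli in a row sum
to at most `|φ| ≤ 1` at the two ends and to `2|φ| ≤ 1 + φ²` inside. By Gershgorin's theorem its
eigenvalues are nonnegative, so `Λ` is positive semidefinite and `Ω` positive definite. Then
`τ(w) ≥ 0`, the quadratic form of `Ω⁻¹` is nonnegative, and `ρ(w^opt) = σ_ε⁻² (1 - Ω Ω⁻¹ 1) = 0`.
-/

open Matrix

/-- The AR(1) precision tridiagonal matrix. -/
noncomputable def ar1Lambda (n : ℕ) (φ : ℝ) : Matrix (Fin n) (Fin n) ℝ :=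
  Matrix.of fun i j =>
    if i = j then (if i.val = 0 ∨ i.val = n - 1 then (1 : ℝ) else 1 + φ ^ 2)
    else if i.val + 1 = j.val ∨ j.val + 1 = i.val then -φ else 0

theorem Matrix.IsHermitian.posSemidef_of_sum_abs_le_diag {ι : Type*} [Fintype ι] [DecidableEq ι]
    {A : Matrix ι ι ℝ} (hA : A.IsHermitian)
    (hdom : ∀ k, ∑ j ∈ Finset.univ.erase k, |A k j| ≤ A k k) : A.PosSemidef := by
  refine hA.posSemidef_iff_eigenvalues_nonneg.mpr fun i => show 0 ≤ hA.eigenvalues i from ?_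
  have hμ : Module.End.HasEigenvalue (toLin' A) (hA.eigenvalues i) := by
    rw [Module.End.hasEigenvalue_iff_mem_spectrum, spectrum_toLin']
    exact hA.eigenvalues_mem_spectrum_real i
  obtain ⟨k, hk⟩ := eigenvalue_mem_ball hμ
  rw [Metric.mem_closedBall, Real.dist_eq] at hk
  simp only [Real.norm_eq_abs] at hk
  linarith [neg_abs_le (hA.eigenvalues i - A k k), hdom k]

theorem Fin.sum_ite_val_eq {M : Type*} [AddCommMonoid M] (n m : ℕ) (c : M) :
    ∑ j : Fin n, (if j.val = m then c else 0) = if m < n then c else 0 := by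
  split_ifs with hm
  · rw [Finset.sum_eq_single ⟨m, hm⟩ (fun j _ hj => if_neg fun h => hj (Fin.ext h)) (by simp)]
    simp
  · exact Finset.sum_eq_zero fun j _ => if_neg (by omega)

theorem ar1Lambda_isHermitian (n : ℕ) (φ : ℝ) : (ar1Lambda n φ).IsHermitian := by
  ext i j
  simp only [ar1Lambda, conjTranspose_apply, of_apply, star_trivial]
  rcases eq_or_ne i j with rfl | h
  · rfl
  · rw [if_neg (Ne.symm h), if_neg h]
    exact if_congr or_comm rfl rfl

theorem sum_abs_ar1Lambda_le (n : ℕ) {φ : ℝ} (hφ : |φ| ≤ 1) (i : Fin n) :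
    ∑ j ∈ Finset.univ.erase i, |ar1Lambda n φ i j| ≤ ar1Lambda n φ i i := by
  have hentry : ∀ j ∈ Finset.univ.erase i, |ar1Lambda n φ i j|
      ≤ (if j.val = i.val + 1 then |φ| else 0) + (if j.val + 1 = i.val then |φ| else 0) := by
    intro j hj
    have hji : i ≠ j := (Finset.ne_of_mem_erase hj).symm
    simp only [ar1Lambda, of_apply, if_neg hji]
    split_ifs <;> first | omega | simp
  have hφ2 : 2 * |φ| ≤ 1 + φ ^ 2 := by nlinarith [sq_abs φ, sq_nonneg (|φ| - 1)]
  have hshift : ∑ j : Fin n, (if j.val + 1 = i.val then |φ| else 0)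
      = if 0 < i.val then |φ| else 0 := by
    rcases i with ⟨_ | m, hi⟩
    · exact Finset.sum_eq_zero fun j _ => if_neg (Nat.succ_ne_zero _)
    · simp only [Nat.add_right_cancel_iff, Fin.sum_ite_val_eq, if_pos (Nat.lt_of_succ_lt hi),
        if_pos m.succ_pos]
  calc ∑ j ∈ Finset.univ.erase i, |ar1Lambda n φ i j|
      ≤ ∑ j : Fin n, ((if j.val = i.val + 1 then |φ| else 0)
          + (if j.val + 1 = i.val then |φ| else 0)) :=
        (Finset.sum_le_sum hentry).trans (Finset.sum_le_sum_of_subset_of_nonneg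
          (Finset.subset_univ _) fun _ _ _ => by positivity)
    _ ≤ ar1Lambda n φ i i := by
        rw [Finset.sum_add_distrib, Fin.sum_ite_val_eq, hshift]
        simp only [ar1Lambda, of_apply, if_true]
        split_ifs <;> first | omega | linarith [abs_nonneg φ]

theorem ar1Lambda_posSemidef (n : ℕ) {φ : ℝ} (hφ : |φ| ≤ 1) : (ar1Lambda n φ).PosSemidef :=
  (ar1Lambda_isHermitian n φ).posSemidef_of_sum_abs_le_diag (sum_abs_ar1Lambda_le n hφ)

theorem stmt_1_general (n : ℕ) (φ : ℝ) (hφ : |φ| < 1)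
    (σε ση : ℝ) (hσε : 0 < σε)
    (Λ : Matrix (Fin n) (Fin n) ℝ) (hΛ : Λ = ar1Lambda n φ)
    (Ω : Matrix (Fin n) (Fin n) ℝ)
    (hΩ : Ω = (σε ^ 2)⁻¹ • (1 : Matrix (Fin n) (Fin n) ℝ) + (ση ^ 2)⁻¹ • Λ)
    (ρ : (Fin n → ℝ) → (Fin n → ℝ))
    (hρ : ∀ w, ρ w = (σε ^ 2)⁻¹ • (1 : Fin n → ℝ) - Ω *ᵥ ((1 : Fin n → ℝ) - w))
    (τ : (Fin n → ℝ) → ℝ)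
    (hτ : ∀ w, τ w = (σε ^ 2)⁻¹ * (w ⬝ᵥ w)
        + (ση ^ 2)⁻¹ * (((1 : Fin n → ℝ) - w) ⬝ᵥ (Λ *ᵥ ((1 : Fin n → ℝ) - w))))
    (rate : (Fin n → ℝ) → ℝ)
    (hrate : ∀ w, rate w = (τ w)⁻¹ * (ρ w ⬝ᵥ (Ω⁻¹ *ᵥ ρ w)))
    (wopt : Fin n → ℝ)
    (hwopt : wopt = (1 : Fin n → ℝ) - (σε ^ 2)⁻¹ • (Ω⁻¹ *ᵥ (1 : Fin n → ℝ))) :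
    (∀ w, 0 ≤ rate w) ∧ rate wopt = 0 := by
  have hΛpsd : Λ.PosSemidef := hΛ ▸ ar1Lambda_posSemidef n hφ.le
  have hΩpd : Ω.PosDef :=
    hΩ ▸ (PosDef.one.smul (by positivity)).add_posSemidef (hΛpsd.smul (by positivity))
  have hτ_nonneg (w : Fin n → ℝ) : 0 ≤ τ w := by
    have hΛw := hΛpsd.dotProduct_mulVec_nonneg (1 - w)
    rw [star_trivial] at hΛw
    have hww := dotProduct_self_star_nonneg w
    rw [hτ]
    positivity
  refine ⟨fun w => ?_, ?_⟩
  · have hΩinv := hΩpd.inv.posSemidef.dotProduct_mulVec_nonneg (ρ w)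
    rw [star_trivial] at hΩinv
    rw [hrate]
    exact mul_nonneg (inv_nonneg.2 (hτ_nonneg w)) hΩinv
  · have hρ_wopt : ρ wopt = 0 := by
      rw [hρ, hwopt, sub_sub_cancel, mulVec_smul, mulVec_mulVec,
        mul_nonsing_inv Ω hΩpd.det_pos.ne'.isUnit, one_mulVec, sub_self]
    rw [hrate, hρ_wopt, zero_dotProduct, mul_zero]

/-- the EM rate of convergence for the location parameter under the
partially noncentered parametrization is `τ(w)⁻¹ ρ(w)ᵀ Ω⁻¹ ρ(w)`; this quantity is
nonnegative for every `w` and equals zero at `w = w^opt = 1 - σ_ε⁻² Ω⁻¹ 1`. -/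
theorem stmt_1 (n : ℕ) (hn : 2 ≤ n) (φ : ℝ) (hφ : |φ| < 1)
    (σε ση : ℝ) (hσε : 0 < σε) (hση : 0 < ση)
    (Λ : Matrix (Fin n) (Fin n) ℝ) (hΛ : Λ = ar1Lambda n φ)
    (Ω : Matrix (Fin n) (Fin n) ℝ)
    (hΩ : Ω = (σε ^ 2)⁻¹ • (1 : Matrix (Fin n) (Fin n) ℝ) + (ση ^ 2)⁻¹ • Λ)
    (ρ : (Fin n → ℝ) → (Fin n → ℝ))
    (hρ : ∀ w, ρ w = (σε ^ 2)⁻¹ • (1 : Fin n → ℝ) - Ω *ᵥ ((1 : Fin n → ℝ) - w))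
    (τ : (Fin n → ℝ) → ℝ)
    (hτ : ∀ w, τ w = (σε ^ 2)⁻¹ * (w ⬝ᵥ w)
        + (ση ^ 2)⁻¹ * (((1 : Fin n → ℝ) - w) ⬝ᵥ (Λ *ᵥ ((1 : Fin n → ℝ) - w))))
    (rate : (Fin n → ℝ) → ℝ)
    (hrate : ∀ w, rate w = (τ w)⁻¹ * (ρ w ⬝ᵥ (Ω⁻¹ *ᵥ ρ w)))
    (wopt : Fin n → ℝ)
    (hwopt : wopt = (1 : Fin n → ℝ) - (σε ^ 2)⁻¹ • (Ω⁻¹ *ᵥ (1 : Fin n → ℝ))) :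
    (∀ w, 0 ≤ rate w) ∧ rate wopt = 0 :=
  stmt_1_general n φ hφ σε ση hσε Λ hΛ Ω hΩ ρ hρ τ hτ rate hrate wopt hwopt
end

section
/- Let Q be the n×n symmetric tridiagonal matrix with diagonal (c₁, c, ..., c, c₁) and off-diagonals -b (b = ±1, c₁ = (1+γ)/|φ|, c = c₁+|φ|, 0<|φ|<1, γ>0). Define r_± = (c ± √(c²-4))/2, v_± = r_± - |φ|, κ₀ = r₊ - r₋, κ_t = v₊ r₊^t - v₋ r₋^t for t = 0,...,n-1, and κ = v₊² r₊^{n-1} - v₋² r₋^{n-1}. Then the inverse of Q satisfies (Q^{-1})_{tj} = u_t v_j for t ≤ j, where v_t = b^{t-1} κ_{n-t}/κ and u_t = b^{t-1} κ_{t-1}/κ₀. -/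
open Matrix

/-- The tridiagonal matrix `Q` with diagonal `(c₁, c, …, c, c₁)` and
off-diagonal entries `-b`. -/
noncomputable def triQ (n : ℕ) (c₁ c b : ℝ) : Matrix (Fin n) (Fin n) ℝ :=
  Matrix.of fun i j =>
    if i = j then (if i.val = 0 ∨ i.val = n - 1 then c₁ else c)
    else if i.val + 1 = j.val ∨ j.val + 1 = i.val then -b else 0

/-!
Conjugating by `D = diag(b^t)` (an involution, as `b² = 1`) turns `Q` into the same matrix with
off-diagonal `-1`, so it suffices to invert that one. A symmetric tridiagonal matrix is inverted by
its Green kernel `x_{min(t,j)} y_{max(t,j)} / W`, where `x` solves the three-term recurrence with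
the left boundary condition, `y` with the right one, and `W` is their (constant) Casoratian.
Here `x_t = κ_t` works because `r_±` are the roots of `r² - c r + 1` and `v_± = r_± - |φ|` gives
`c₁ κ_0 = κ_1`; by the reversal symmetry of `Q`, `y_t = κ_{n-1-t}` is the reflected solution; and
`r₊ r₋ = 1` makes the Casoratian `κ₀ κ`, which is positive since `r₋ < 1 < r₊` and `v₋² < v₊²`.
-/

section Tridiagonal

variable {R : Type*} [CommRing R]

def symmTridiag (n : ℕ) (d : ℕ → R) (e : R) : Matrix (Fin n) (Fin n) R :=
  of fun i j => if i = j then d i else if (i : ℕ) + 1 = j ∨ (j : ℕ) + 1 = i then -e else 0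

lemma symmTridiag_mul_of_apply {n : ℕ} (d : ℕ → R) (e : R) (G : ℕ → ℕ → R) (i j : Fin n) :
    (symmTridiag n d e * of fun p q : Fin n => G p q) i j =
      d i * G i j - e * (if (i : ℕ) + 1 < n then G (i + 1) j else 0)
        - e * (if 0 < (i : ℕ) then G (i - 1) j else 0) := by
  have hsummand : ∀ k : Fin n, symmTridiag n d e i k * G k j =
      (if (i : ℕ) = k then d i * G k j else 0) + (if (i : ℕ) + 1 = k then -e * G k j else 0)
        + (if (k : ℕ) + 1 = i then -e * G k j else 0) := by
    intro k
    simp only [symmTridiag, of_apply, Fin.ext_iff]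
    split_ifs <;> first | omega | simp
  simp only [mul_apply, of_apply]
  rw [Finset.sum_congr rfl fun k _ => hsummand k,
    Fin.sum_univ_eq_sum_range (fun k => (if (i : ℕ) = k then d i * G k j else 0) +
      (if (i : ℕ) + 1 = k then -e * G k j else 0) + (if k + 1 = i then -e * G k j else 0)),
    Finset.sum_add_distrib, Finset.sum_add_distrib, Finset.sum_ite_eq, Finset.sum_ite_eq]
  obtain ⟨_ | p, hp⟩ := i
  · simp [hp, sub_eq_add_neg, neg_ite]
  · simp [hp, Nat.lt_of_succ_lt hp, sub_eq_add_neg, neg_ite]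

lemma diagonal_pow_conj_symmTridiag {n : ℕ} {s : R} (hs : s * s = 1) (d : ℕ → R) (e : R) :
    diagonal (fun i : Fin n => s ^ (i : ℕ)) * symmTridiag n d e *
      diagonal (fun i : Fin n => s ^ (i : ℕ)) = symmTridiag n d (s * e) := by
  ext i j
  simp only [diagonal_mul, mul_diagonal, symmTridiag, of_apply]
  split_ifs with hij hadj
  · subst hij
    linear_combination d i * pow_mul_pow_eq_one i hs
  · rcases hadj with h | h
    · rw [← h, pow_succ]
      linear_combination -s * e * pow_mul_pow_eq_one i hs
    · rw [← h, pow_succ]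
      linear_combination -s * e * pow_mul_pow_eq_one j hs
  · simp

lemma inv_symmTridiag_mul_eq_conj {n : ℕ} {s : R} (hs : s * s = 1) (d : ℕ → R) (e : R) :
    (symmTridiag n d (s * e))⁻¹ = diagonal (fun i : Fin n => s ^ (i : ℕ)) *
      (symmTridiag n d e)⁻¹ * diagonal (fun i : Fin n => s ^ (i : ℕ)) := by
  have hD :
      diagonal (fun i : Fin n => s ^ (i : ℕ)) * diagonal (fun i : Fin n => s ^ (i : ℕ)) = 1 := by
    rw [diagonal_mul_diagonal, ← diagonal_one]
    exact congrArg diagonal (funext fun i => pow_mul_pow_eq_one i hs)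
  rw [← diagonal_pow_conj_symmTridiag hs, Matrix.mul_inv_rev, Matrix.mul_inv_rev,
    inv_eq_left_inv hD, mul_assoc]

end Tridiagonal

section Green

variable {K : Type*} [Field K]

def greenKernel (x y : ℕ → K) (W : K) (p q : ℕ) : K :=
  x (min p q) * y (max p q) / W

theorem symmTridiag_mul_greenKernel {m : ℕ} {d : ℕ → K} {e W : K} {x y : ℕ → K} (hW0 : W ≠ 0)
    (hx₀ : d 0 * x 0 = e * x 1)
    (hx : ∀ k < m, d (k + 1) * x (k + 1) = e * (x k + x (k + 2)))
    (hy : ∀ k < m, d (k + 1) * y (k + 1) = e * (y k + y (k + 2)))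
    (hyₘ : d (m + 1) * y (m + 1) = e * y m)
    (hW : ∀ k ≤ m, e * (x (k + 1) * y k - x k * y (k + 1)) = W) :
    symmTridiag (m + 2) d e * of (fun p q : Fin (m + 2) => greenKernel x y W p q) = 1 := by
  ext ⟨p, hp⟩ ⟨q, hq⟩
  rw [symmTridiag_mul_of_apply]
  simp only [one_apply, Fin.mk.injEq, greenKernel]
  rcases lt_trichotomy p q with hpq | rfl | hpq
  · rcases p with _ | k
    · simp (disch := omega) only [if_pos, if_neg, min_eq_left, max_eq_left, max_eq_right]
      linear_combination y q / W * hx₀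
    · simp (disch := omega) only [if_pos, if_neg, Nat.add_sub_cancel, min_eq_left, max_eq_right]
      linear_combination y q / W * hx k (by omega)
  · rcases p with _ | k
    · simp (disch := omega) only [if_pos, if_neg, if_true, min_eq_left, min_eq_right, max_eq_left]
      field_simp
      linear_combination y 0 * hx₀ + hW 0 (by omega)
    · rcases (by omega : k < m ∨ k = m) with hk | rfl
      · simp (disch := omega) only [if_pos, if_true, Nat.add_sub_cancel, min_eq_left, min_eq_right,
          max_eq_left, max_eq_right]
        field_simp
        linear_combination y (k + 1) * hx k hk + hW (k + 1) hk
      · simp (disch := omega) only [if_pos, if_neg, if_true, Nat.add_sub_cancel, min_eq_left,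
          max_eq_left, max_eq_right]
        field_simp
        linear_combination x (k + 1) * hyₘ + hW k le_rfl
  · obtain ⟨k, rfl⟩ : ∃ k, p = k + 1 := ⟨p - 1, by omega⟩
    rcases (by omega : k < m ∨ k = m) with hk | rfl
    · simp (disch := omega) only [if_pos, if_neg, Nat.add_sub_cancel, min_eq_right, max_eq_left]
      linear_combination x q / W * hy k hk
    · simp (disch := omega) only [if_pos, if_neg, Nat.add_sub_cancel, min_eq_right, max_eq_left]
      linear_combination x q / W * hyₘ

end Green

lemma triQ_eq_symmTridiag (n : ℕ) (c₁ c b : ℝ) :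
    triQ n c₁ c b = symmTridiag n (fun i => if i = 0 ∨ i = n - 1 then c₁ else c) b := rfl

theorem inv_triQ_one_eq_greenKernel {m : ℕ} {c₁ c W : ℝ} {f : ℕ → ℝ} (hW : W ≠ 0)
    (hrec : ∀ t, f (t + 2) = c * f (t + 1) - f t) (hf₀ : c₁ * f 0 = f 1)
    (hcas : ∀ k l, k + l = m → f (k + 1) * f (l + 1) - f k * f l = W) :
    (triQ (m + 2) c₁ c 1)⁻¹ =
      of fun p q : Fin (m + 2) => greenKernel f (fun k => f (m + 1 - k)) W p q := by
  rw [triQ_eq_symmTridiag]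
  refine inv_eq_right_inv
    (symmTridiag_mul_greenKernel hW ?_ (fun k hk => ?_) (fun k hk => ?_) ?_ (fun k hk => ?_))
  · simpa using hf₀
  · rw [if_neg (by omega)]
    linear_combination -hrec k
  · obtain ⟨s, rfl⟩ : ∃ s, m = k + 1 + s := ⟨m - k - 1, by omega⟩
    rw [if_neg (by omega), show k + 1 + s + 1 - (k + 1) = s + 1 by omega,
      show k + 1 + s + 1 - k = s + 2 by omega, show k + 1 + s + 1 - (k + 2) = s by omega]
    linear_combination -hrec s
  · simpa using hf₀
  · obtain ⟨l, rfl⟩ : ∃ l, m = k + l := ⟨m - k, by omega⟩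
    rw [show k + l + 1 - k = l + 1 by omega, show k + l + 1 - (k + 1) = l by omega]
    linear_combination hcas k l rfl

section Binet

variable {R : Type*} [CommRing R]

def binetSeq (p q rp rm : R) (t : ℕ) : R := p * rp ^ t - q * rm ^ t

variable {p q rp rm : R}

lemma binetSeq_add_two (h : rp * rm = 1) (t : ℕ) :
    binetSeq p q rp rm (t + 2) = (rp + rm) * binetSeq p q rp rm (t + 1) - binetSeq p q rp rm t := by
  simp only [binetSeq]
  linear_combination (q * rm ^ t - p * rp ^ t) * h

lemma binetSeq_sub_sub_one (a : R) :
    binetSeq (rp - a) (rm - a) rp rm 1 = (rp + rm - a) * binetSeq (rp - a) (rm - a) rp rm 0 := by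
  simp only [binetSeq]
  ring

lemma binetSeq_casoratian (h : rp * rm = 1) (k l : ℕ) :
    binetSeq p q rp rm (k + 1) * binetSeq p q rp rm (l + 1)
        - binetSeq p q rp rm k * binetSeq p q rp rm l =
      (rp - rm) * binetSeq (p ^ 2) (q ^ 2) rp rm (k + l + 1) := by
  simp only [binetSeq]
  linear_combination (p ^ 2 * rp ^ (k + l) + q ^ 2 * rm ^ (k + l)
    - p * q * (rp ^ k * rm ^ l + rm ^ k * rp ^ l)) * h

end Binet

lemma binetSeq_pos {p q rp rm : ℝ} (hq : 0 ≤ q) (hqp : q < p) (hrm₀ : 0 ≤ rm) (hrm₁ : rm ≤ 1)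
    (hrp : 1 ≤ rp) (t : ℕ) : 0 < binetSeq p q rp rm t := by
  have h₁ : q * rm ^ t ≤ q := mul_le_of_le_one_right hq (pow_le_one₀ hrm₀ hrm₁)
  have h₂ : p ≤ p * rp ^ t := le_mul_of_one_le_right (hq.trans hqp.le) (one_le_pow₀ hrp)
  simp only [binetSeq]
  linarith

lemma two_lt_div_add_self {a γ : ℝ} (ha : 0 < a) (hγ : 0 < γ) : 2 < (1 + γ) / a + a := by
  rw [div_add' _ _ _ ha.ne', lt_div_iff₀ ha]
  nlinarith [sq_nonneg (1 - a)]

lemma sq_sub_lt_sq_sub {a rp rm : ℝ} (hlt : rm < rp) (ha : 2 * a < rp + rm) :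
    (rm - a) ^ 2 < (rp - a) ^ 2 := by
  nlinarith

lemma reciprocal_roots_bounds {c rp rm : ℝ} (hc : 2 < c) (hrp : rp = (c + √(c ^ 2 - 4)) / 2)
    (hrm : rm = (c - √(c ^ 2 - 4)) / 2) : rp * rm = 1 ∧ 0 < rm ∧ rm < 1 ∧ 1 < rp := by
  have hs : √(c ^ 2 - 4) ^ 2 = c ^ 2 - 4 := Real.sq_sqrt (by nlinarith)
  have hs₀ : 0 < √(c ^ 2 - 4) := Real.sqrt_pos.mpr (by nlinarith)
  have hsc : √(c ^ 2 - 4) < c := by nlinarith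
  have hprod : rp * rm = 1 := by
    rw [hrp, hrm]
    linear_combination -hs / 4
  exact ⟨hprod, by rw [hrm]; linarith, by nlinarith, by nlinarith⟩

/-- explicit formula for the inverse of `Q`:
`(Q⁻¹)_{tj} = u_t v_j` for `t ≤ j` (here stated in 0-based indexing, so
`u_t = b^t κ_t / κ₀` and `v_t = b^t κ_{n-1-t} / κ`). -/
theorem stmt_5 (n : ℕ) (hn : 2 ≤ n) (φ γ : ℝ) (hφ0 : φ ≠ 0) (hφ : |φ| < 1) (hγ : 0 < γ)
    (b c₁ c : ℝ) (hb : b = φ / |φ|) (hc₁ : c₁ = (1 + γ) / |φ|) (hc : c = c₁ + |φ|)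
    (rp rm : ℝ) (hrp : rp = (c + Real.sqrt (c ^ 2 - 4)) / 2)
    (hrm : rm = (c - Real.sqrt (c ^ 2 - 4)) / 2)
    (vp vm : ℝ) (hvp : vp = rp - |φ|) (hvm : vm = rm - |φ|)
    (κ₀ : ℝ) (hκ₀ : κ₀ = rp - rm)
    (κf : ℕ → ℝ) (hκf : ∀ t, κf t = vp * rp ^ t - vm * rm ^ t)
    (κ : ℝ) (hκ : κ = vp ^ 2 * rp ^ (n - 1) - vm ^ 2 * rm ^ (n - 1))
    (u v : Fin n → ℝ)
    (hu : ∀ t : Fin n, u t = b ^ t.val * κf t.val / κ₀)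
    (hv : ∀ t : Fin n, v t = b ^ t.val * κf (n - 1 - t.val) / κ) :
    ∀ t j : Fin n, t ≤ j → (triQ n c₁ c b)⁻¹ t j = u t * v j := by
  obtain ⟨m, rfl⟩ : ∃ m, n = m + 2 := ⟨n - 2, by omega⟩
  have ha : 0 < |φ| := abs_pos.mpr hφ0
  have hbb : b * b = 1 := by rw [hb, ← sq, div_pow, sq_abs, div_self (pow_ne_zero 2 hφ0)]
  have hc2 : 2 < c := hc ▸ hc₁ ▸ two_lt_div_add_self ha hγ
  obtain ⟨hprod, hrm₀, hrm₁, hrp₁⟩ := reciprocal_roots_bounds hc2 hrp hrm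
  have hsum : rp + rm = c := by rw [hrp, hrm]; ring
  have hκ₀pos : 0 < κ₀ := by linarith
  have hφc : |φ| < (1 + γ) / |φ| := by rw [lt_div_iff₀ ha]; nlinarith
  have hvsq : vm ^ 2 < vp ^ 2 := hvp ▸ hvm ▸ sq_sub_lt_sq_sub (by linarith) (by linarith)
  have hκpos : 0 < κ := hκ ▸ binetSeq_pos (sq_nonneg vm) hvsq hrm₀.le hrm₁.le hrp₁.le _
  obtain rfl : κf = binetSeq vp vm rp rm := funext hκf
  have hinv : (triQ (m + 2) c₁ c 1)⁻¹ = of fun p q : Fin (m + 2) => greenKernel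
      (binetSeq vp vm rp rm) (fun k => binetSeq vp vm rp rm (m + 1 - k)) (κ₀ * κ) p q := by
    refine inv_triQ_one_eq_greenKernel (by positivity) (fun t => ?_) ?_ (fun k l hkl => ?_)
    · rw [binetSeq_add_two hprod, hsum]
    · rw [hvp, hvm, binetSeq_sub_sub_one, hsum]
      congr 1
      linarith
    · rw [binetSeq_casoratian hprod, hκ₀, hκ, hkl]
      rfl
  intro t j htj
  have htj' : (t : ℕ) ≤ j := htj
  rw [triQ_eq_symmTridiag, ← mul_one b, inv_symmTridiag_mul_eq_conj hbb, ← triQ_eq_symmTridiag,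
    hinv]
  simp only [greenKernel, mul_diagonal, diagonal_mul, of_apply, min_eq_left htj',
    max_eq_right htj', hu, hv, Nat.add_one_sub_one]
  ring
end

section
/- With Q and its inverse as above, the sum of the t-th row of Q^{-1} equals s_t = (2b - c)^{-1} { b(1-φ)(v_t + v_{n-t+1}) - 1 }, where v_t = b^{t-1} κ_{n-t}/κ. -/
/-!
Write `w_t = b^t κ_{n-1-t}`. Because `b² = 1` and `κ_t` is a combination of the powers of the
two roots of `r² - c r + 1`, so that `κ_{t+2} = c κ_{t+1} - κ_t`, every interior row of `Q`
annihilates `w`; the boundary values of `κ` give `Q w = κ e₀`, and the reflection symmetry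
`Q_{rev i, rev j} = Q_{i j}` turns this into `Q (w ∘ rev) = κ e_{n-1}`. As `Q 1` is `c₁ - b` on
the two boundary rows and `c - 2b` on the others, the vector `s` of the statement solves `Q s = 1`.
Finally `Q` is strictly diagonally dominant, hence invertible, and the row sums of `Q⁻¹` are
`Q⁻¹ 1 = s`.
-/

open Matrix

@[elab_as_elim]
lemma Fin.zero_inner_last_cases {m : ℕ} {P : Fin (m + 2) → Prop} (zero : P 0)
    (inner : ∀ k (hk : k < m), P ⟨k + 1, by omega⟩) (last : P (Fin.last (m + 1)))
    (i : Fin (m + 2)) : P i := by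
  obtain ⟨_ | k, hk⟩ := i
  · exact zero
  · obtain hkm | rfl : k < m ∨ k = m := by omega
    exacts [inner k hkm, last]

section triQ

variable {n : ℕ} {c₁ c b : ℝ}

lemma triQ_apply (i j : Fin n) :
    triQ n c₁ c b i j =
      if (i : ℕ) = j then (if (i : ℕ) = 0 ∨ (i : ℕ) = n - 1 then c₁ else c)
      else if (i : ℕ) + 1 = j ∨ (j : ℕ) + 1 = i then -b else 0 := by
  simp [triQ, Fin.ext_iff]

lemma triQ_rev_rev (i j : Fin n) : triQ n c₁ c b i.rev j.rev = triQ n c₁ c b i j := by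
  simp only [triQ_apply, Fin.val_rev]
  have := i.isLt
  have := j.isLt
  split_ifs
  all_goals first | rfl | omega

lemma triQ_mulVec_comp_rev (x : Fin n → ℝ) :
    triQ n c₁ c b *ᵥ (x ∘ Fin.rev) = (triQ n c₁ c b *ᵥ x) ∘ Fin.rev := by
  ext i
  simp only [mulVec, dotProduct, Function.comp_apply]
  rw [← Equiv.sum_comp Fin.revPerm]
  refine Finset.sum_congr rfl fun j _ => ?_
  rw [Fin.revPerm_apply, Fin.rev_rev, ← triQ_rev_rev i.rev, Fin.rev_rev]

lemma triQ_mulVec_apply_eq_sum (x : Fin n → ℝ) (i : Fin n) (s : Finset (Fin n))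
    (hs : ∀ j : Fin n, (j : ℕ) ≤ i + 1 → (i : ℕ) ≤ j + 1 → j ∈ s) :
    (triQ n c₁ c b *ᵥ x) i = ∑ j ∈ s, triQ n c₁ c b i j * x j := by
  refine (Finset.sum_subset s.subset_univ fun j _ hj => ?_).symm
  have hfar : ¬((j : ℕ) ≤ i + 1 ∧ (i : ℕ) ≤ j + 1) := fun h => hj (hs j h.1 h.2)
  change triQ n c₁ c b i j * x j = 0
  rw [triQ_apply, if_neg (by omega), if_neg (by omega), zero_mul]

variable {m : ℕ}

lemma triQ_mulVec_apply_zero (x : Fin (m + 2) → ℝ) :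
    (triQ (m + 2) c₁ c b *ᵥ x) 0 = c₁ * x 0 - b * x 1 := by
  rw [triQ_mulVec_apply_eq_sum _ _ {0, 1}, Finset.sum_pair (by simp)]
  · simp [triQ_apply, sub_eq_add_neg]
  · intro j hj _
    simp only [Finset.mem_insert, Finset.mem_singleton, Fin.ext_iff, Fin.val_zero, Fin.val_one]
      at hj ⊢
    omega

lemma triQ_mulVec_apply_last (x : Fin (m + 2) → ℝ) :
    (triQ (m + 2) c₁ c b *ᵥ x) (Fin.last (m + 1)) =
      c₁ * x (Fin.last (m + 1)) - b * x (Fin.last m).castSucc := by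
  rw [triQ_mulVec_apply_eq_sum _ _ {Fin.last (m + 1), (Fin.last m).castSucc},
    Finset.sum_pair (by simp [Fin.ext_iff])]
  · simp [triQ_apply, sub_eq_add_neg]
  · intro j _ hj
    simp only [Finset.mem_insert, Finset.mem_singleton, Fin.ext_iff, Fin.val_last,
      Fin.val_castSucc] at hj ⊢
    omega

lemma triQ_mulVec_apply_succ (x : Fin (m + 2) → ℝ) (k : ℕ) (hk : k < m) :
    (triQ (m + 2) c₁ c b *ᵥ x) ⟨k + 1, by omega⟩ =
      c * x ⟨k + 1, by omega⟩ - b * x ⟨k, by omega⟩ - b * x ⟨k + 2, by omega⟩ := by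
  rw [triQ_mulVec_apply_eq_sum _ _ {⟨k + 1, by omega⟩, ⟨k, by omega⟩, ⟨k + 2, by omega⟩},
    Finset.sum_insert (by simp), Finset.sum_pair (by simp)]
  · simp [triQ_apply, sub_eq_add_neg, hk.ne, add_assoc]
  · intro j _ _
    simp only [Finset.mem_insert, Finset.mem_singleton, Fin.ext_iff] at *
    omega

lemma triQ_mulVec_one (i : Fin (m + 2)) :
    (triQ (m + 2) c₁ c b *ᵥ 1) i =
      if (i : ℕ) = 0 ∨ (i : ℕ) = m + 1 then c₁ - b else c - 2 * b := by
  induction i using Fin.zero_inner_last_cases with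
  | zero => simp [triQ_mulVec_apply_zero]
  | inner k hk =>
    rw [triQ_mulVec_apply_succ _ _ hk, if_neg (by simp only; omega)]
    simp only [Pi.one_apply]
    ring
  | last => simp [triQ_mulVec_apply_last]

lemma det_triQ_ne_zero (h₁ : |b| < c₁) (h : 2 * |b| < c) :
    (triQ (m + 2) c₁ c b).det ≠ 0 := by
  refine det_ne_zero_of_sum_row_lt_diag fun k => ?_
  have hnorm : ∀ j, ‖triQ (m + 2) c₁ c b k j‖ = triQ (m + 2) c₁ c (-|b|) k j := by
    intro j
    simp only [triQ_apply, Real.norm_eq_abs, neg_neg]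
    have := abs_nonneg b
    split_ifs <;> simp [abs_of_pos, show 0 < c₁ by linarith, show 0 < c by linarith]
  have hrow : ∑ j, triQ (m + 2) c₁ c (-|b|) k j = (triQ (m + 2) c₁ c (-|b|) *ᵥ 1) k := by
    simp [mulVec, dotProduct]
  simp only [hnorm]
  rw [← add_lt_add_iff_left (triQ (m + 2) c₁ c (-|b|) k k),
    Finset.add_sum_erase _ _ (Finset.mem_univ k),
    hrow, triQ_mulVec_one, triQ_apply]
  simp only [if_true, show m + 2 - 1 = m + 1 from rfl]
  split_ifs <;> linarith

lemma triQ_mulVec_pow_mul (hb : b * b = 1) (x : ℕ → ℝ)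
    (hrec : ∀ s, x (s + 2) = c * x (s + 1) - x s)
    (h₀ : c₁ * x 0 = x 1) :
    triQ (m + 2) c₁ c b *ᵥ (fun t => b ^ (t : ℕ) * x (m + 1 - t)) =
      Pi.single 0 (c₁ * x (m + 1) - x m) := by
  ext i
  induction i using Fin.zero_inner_last_cases with
  | zero =>
    simp only [triQ_mulVec_apply_zero, Pi.single_eq_same, Fin.val_zero, Fin.val_one, pow_zero,
      pow_one, one_mul, Nat.sub_zero, Nat.add_sub_cancel]
    linear_combination (-x m) * hb
  | inner k hk =>
    rw [triQ_mulVec_apply_succ _ _ hk, Pi.single_eq_of_ne (by simp [Fin.ext_iff])]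
    obtain ⟨e, rfl⟩ : ∃ e, m = k + e + 1 := ⟨m - k - 1, by omega⟩
    simp only [show k + e + 1 + 1 - (k + 1) = e + 1 by omega,
      show k + e + 1 + 1 - k = e + 2 by omega, show k + e + 1 + 1 - (k + 2) = e by omega,
      hrec, pow_succ]
    linear_combination (-(b * b ^ k * x e)) * hb
  | last =>
    rw [triQ_mulVec_apply_last, Pi.single_eq_of_ne (by simp [Fin.ext_iff])]
    simp only [Fin.val_last, Fin.val_castSucc, pow_succ, Nat.sub_self, Nat.add_sub_cancel_left,
      ← h₀]
    ring

theorem sum_inv_triQ_apply (hb : b * b = 1) (hc₁ : 1 < c₁) (hc : 2 < c) (x : ℕ → ℝ)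
    (hrec : ∀ s, x (s + 2) = c * x (s + 1) - x s) (h₀ : c₁ * x 0 = x 1) {κ : ℝ}
    (hκ : c₁ * x (m + 1) - x m = κ) (hκ₀ : κ ≠ 0) (t : Fin (m + 2)) :
    ∑ j, (triQ (m + 2) c₁ c b)⁻¹ t j =
      (2 * b - c)⁻¹ * ((c₁ + b - c) *
        (b ^ (t : ℕ) * x (m + 1 - t) / κ + b ^ (t.rev : ℕ) * x (m + 1 - t.rev) / κ) - 1) := by
  set v : Fin (m + 2) → ℝ := fun t => b ^ (t : ℕ) * x (m + 1 - t) / κ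
  have hb₁ : |b| = 1 := by rcases mul_self_eq_one_iff.mp hb with rfl | rfl <;> simp
  have hD : 2 * b - c ≠ 0 := by linarith [le_abs_self b]
  have hv : triQ (m + 2) c₁ c b *ᵥ v = Pi.single 0 1 := by
    have : v = κ⁻¹ • fun t : Fin (m + 2) => b ^ (t : ℕ) * x (m + 1 - t) := by
      ext; simp [v, div_eq_inv_mul]
    rw [this, mulVec_smul, triQ_mulVec_pow_mul hb _ hrec h₀, hκ, ← Pi.single_smul, smul_eq_mul,
      inv_mul_cancel₀ hκ₀]
  have hv_rev : triQ (m + 2) c₁ c b *ᵥ (v ∘ Fin.rev) = Pi.single (Fin.last (m + 1)) 1 := by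
    rw [triQ_mulVec_comp_rev, hv]
    ext i
    simp [Pi.single_apply, Fin.rev_eq_iff]
  have hdet : IsUnit (triQ (m + 2) c₁ c b).det :=
    isUnit_iff_ne_zero.mpr (det_triQ_ne_zero (by linarith) (by linarith))
  set s : Fin (m + 2) → ℝ := (2 * b - c)⁻¹ • ((c₁ + b - c) • (v + v ∘ Fin.rev) - 1)
  have hQs : triQ (m + 2) c₁ c b *ᵥ s = 1 := by
    ext i
    simp only [s, mulVec_smul, mulVec_sub, mulVec_add, hv, hv_rev, triQ_mulVec_one,
      Pi.smul_apply, Pi.sub_apply, Pi.add_apply, Pi.single_apply, Pi.one_apply, smul_eq_mul,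
      Fin.ext_iff, Fin.val_zero, Fin.val_last]
    split_ifs <;> first | omega | (field_simp; ring)
  have hinv : (triQ (m + 2) c₁ c b)⁻¹ *ᵥ 1 = s := by
    conv_lhs => rw [← hQs, mulVec_mulVec, nonsing_inv_mul _ hdet, one_mulVec]
  have ht := congrFun hinv t
  simp only [mulVec, dotProduct, Pi.one_apply, mul_one] at ht
  exact ht

end triQ

lemma add_sqrt_div_two_mul_sub_sqrt_div_two {c : ℝ} (hc : 2 ≤ c) :
    (c + √(c ^ 2 - 4)) / 2 * ((c - √(c ^ 2 - 4)) / 2) = 1 := by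
  linear_combination (-1 / 4 : ℝ) * Real.sq_sqrt (show 0 ≤ c ^ 2 - 4 by nlinarith)

def kappaSeq (a r r' : ℝ) (t : ℕ) : ℝ := (r - a) * r ^ t - (r' - a) * r' ^ t

section kappaSeq

variable {a c₁ r r' : ℝ}

lemma kappaSeq_add_two (hsum : r + r' = c₁ + a) (hprod : r * r' = 1) (s : ℕ) :
    kappaSeq a r r' (s + 2) = (c₁ + a) * kappaSeq a r r' (s + 1) - kappaSeq a r r' s := by
  simp only [kappaSeq, ← hsum, pow_succ]
  linear_combination (-((r - a) * r ^ s - (r' - a) * r' ^ s)) * hprod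

lemma mul_kappaSeq_zero (hsum : r + r' = c₁ + a) :
    c₁ * kappaSeq a r r' 0 = kappaSeq a r r' 1 := by
  simp only [kappaSeq]
  linear_combination (-(r - r')) * hsum

lemma mul_kappaSeq_succ_sub (hsum : r + r' = c₁ + a) (hprod : r * r' = 1) (m : ℕ) :
    c₁ * kappaSeq a r r' (m + 1) - kappaSeq a r r' m =
      (r - a) ^ 2 * r ^ (m + 1) - (r' - a) ^ 2 * r' ^ (m + 1) := by
  simp only [kappaSeq, pow_succ]
  linear_combination ((r' - a) * r' ^ m * r' - (r - a) * r ^ m * r) * hsum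
    + ((r - a) * r ^ m - (r' - a) * r' ^ m) * hprod

lemma sub_sq_mul_pow_sub_sub_sq_mul_pow_pos (hsum : r + r' = c₁ + a) (hprod : r * r' = 1)
    (hr : 1 < r) (ha : a < c₁) (k : ℕ) : 0 < (r - a) ^ 2 * r ^ k - (r' - a) ^ 2 * r' ^ k := by
  have hr'₀ : 0 < r' := pos_of_mul_pos_right (hprod ▸ one_pos) (by linarith)
  have hr'₁ : r' < 1 := by nlinarith
  have hlt : |r' - a| < |r - a| := by
    rw [abs_of_pos (show 0 < r - a by linarith)]
    exact abs_lt.mpr ⟨by linarith, by linarith⟩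
  rw [sub_pos]
  calc (r' - a) ^ 2 * r' ^ k ≤ (r' - a) ^ 2 :=
        mul_le_of_le_one_right (sq_nonneg _) (pow_le_one₀ hr'₀.le hr'₁.le)
    _ < (r - a) ^ 2 := sq_lt_sq.mpr hlt
    _ ≤ (r - a) ^ 2 * r ^ k := le_mul_of_one_le_right (sq_nonneg _) (one_le_pow₀ hr.le)

end kappaSeq

/-- In 0-based indexing `v_t = b^t κ_{n-1-t}/κ`, and the paper's pairing `t ↔ n-t+1`
is `t ↔ t.rev`. -/
theorem stmt_6 (n : ℕ) (hn : 2 ≤ n) (φ γ : ℝ) (hφ0 : φ ≠ 0) (hφ : |φ| < 1) (hγ : 0 < γ)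
    (b c₁ c : ℝ) (hb : b = φ / |φ|) (hc₁ : c₁ = (1 + γ) / |φ|) (hc : c = c₁ + |φ|)
    (rp rm : ℝ) (hrp : rp = (c + Real.sqrt (c ^ 2 - 4)) / 2)
    (hrm : rm = (c - Real.sqrt (c ^ 2 - 4)) / 2)
    (vp vm : ℝ) (hvp : vp = rp - |φ|) (hvm : vm = rm - |φ|)
    (κf : ℕ → ℝ) (hκf : ∀ t, κf t = vp * rp ^ t - vm * rm ^ t)
    (κ : ℝ) (hκ : κ = vp ^ 2 * rp ^ (n - 1) - vm ^ 2 * rm ^ (n - 1))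
    (v : Fin n → ℝ) (hv : ∀ t : Fin n, v t = b ^ t.val * κf (n - 1 - t.val) / κ) :
    ∀ t : Fin n, (∑ j, (triQ n c₁ c b)⁻¹ t j)
      = (2 * b - c)⁻¹ * (b * (1 - φ) * (v t + v t.rev) - 1) := by
  obtain ⟨m, rfl⟩ : ∃ m, n = m + 2 := ⟨n - 2, by omega⟩
  rw [show m + 2 - 1 = m + 1 from rfl] at hκ hv
  have ha : 0 < |φ| := abs_pos.mpr hφ0
  have hbφ : b * φ = |φ| := by
    rw [hb, div_mul_eq_mul_div, ← abs_mul_abs_self, mul_div_assoc, div_self ha.ne', mul_one]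
  have hb2 : b * b = 1 := by
    rw [hb, div_mul_div_comm, abs_mul_abs_self, div_self (mul_self_ne_zero.mpr hφ0)]
  have hc₁φ : c₁ * |φ| = 1 + γ := by rw [hc₁, div_mul_cancel₀ _ ha.ne']
  have hc₁1 : 1 < c₁ := by nlinarith
  have hc2 : 2 < c := by nlinarith [sq_nonneg (1 - |φ|)]
  have hsum : rp + rm = c₁ + |φ| := by rw [hrp, hrm, ← hc]; ring
  have hprod : rp * rm = 1 := by rw [hrp, hrm]; exact add_sqrt_div_two_mul_sub_sqrt_div_two hc2.le
  have hrp1 : 1 < rp := by rw [hrp]; linarith [Real.sqrt_nonneg (c ^ 2 - 4)]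
  have hκf' : κf = kappaSeq |φ| rp rm := funext fun t => by rw [hκf, hvp, hvm, kappaSeq]
  have hκ' : c₁ * κf (m + 1) - κf m = κ := by
    rw [hκf', mul_kappaSeq_succ_sub hsum hprod, hκ, hvp, hvm]
  have hκ0 : κ ≠ 0 := by
    rw [hκ, hvp, hvm]
    exact (sub_sq_mul_pow_sub_sub_sq_mul_pow_pos hsum hprod hrp1 (by linarith) _).ne'
  intro t
  rw [hv, hv, sum_inv_triQ_apply hb2 hc₁1 hc2 κf
    (by rw [hc, hκf']; exact kappaSeq_add_two hsum hprod)
    (by rw [hκf']; exact mul_kappaSeq_zero hsum)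
    hκ' hκ0]
  rw [mul_one_sub, hbφ, hc]
  ring
end

section
/- If 0 < φ < 1, then every entry of Q^{-1} is positive, where Q is the symmetric tridiagonal matrix with diagonal (c₁, c, ..., c, c₁), c₁ = (1+γ)/φ, c = c₁ + φ, and off-diagonal entries -1, with γ > 0. -/
/-!
`Q` has non-positive off-diagonal entries and positive row sums (`c₁ - 1 > 0` in the end rows,
`c - 2 = ((1 - φ)² + γ) / φ > 0` in the others), so a discrete minimum principle holds: if
`Q x ≥ 0`, then at an index `m` where `x` is minimal, `0 ≤ (Q x)_m ≤ (row sum)_m · x_m`, hence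
`x ≥ 0`. Applied to the `j`-th column `x` of `Q⁻¹`, i.e. `Q x = e_j`, this gives `x ≥ 0`; and
a zero `x_a = 0` forces the neighbours `x_{a ± 1}` to vanish too, so the zeros spread along the
chain `0 - 1 - ⋯ - (n-1)` up to `j`, contradicting `(Q x)_j = 1`.
-/

open Matrix

open Relation

namespace Matrix

variable {ι : Type*} {A : Matrix ι ι ℝ} {x : ι → ℝ}

theorem entry_mul_nonpos_of_eq_zero (hoff : ∀ i k, i ≠ k → A i k ≤ 0) (hx : 0 ≤ x) {a : ι}
    (ha : x a = 0) (k : ι) : A a k * x k ≤ 0 := by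
  rcases eq_or_ne a k with rfl | hak
  · simp [ha]
  · exact mul_nonpos_of_nonpos_of_nonneg (hoff a k hak) (hx k)

variable [Fintype ι]

theorem nonneg_of_mulVec_nonneg (hoff : ∀ i k, i ≠ k → A i k ≤ 0)
    (hrow : ∀ i, 0 < ∑ k, A i k) (hAx : 0 ≤ A *ᵥ x) : 0 ≤ x := by
  intro i
  obtain ⟨m, -, hm⟩ := Finset.exists_min_image Finset.univ x ⟨i, Finset.mem_univ i⟩
  by_contra! hneg
  have hxm : x m < 0 := (hm i (Finset.mem_univ i)).trans_lt hneg
  have hle : (A *ᵥ x) m ≤ (∑ k, A m k) * x m := by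
    rw [Finset.sum_mul]
    refine Finset.sum_le_sum fun k _ => ?_
    rcases eq_or_ne m k with rfl | hmk
    · rfl
    · exact mul_le_mul_of_nonpos_left (hm k (Finset.mem_univ k)) (hoff m k hmk)
  linarith [show 0 ≤ (A *ᵥ x) m from hAx m, mul_neg_of_pos_of_neg (hrow m) hxm]

theorem eq_zero_of_reflTransGen (hoff : ∀ i k, i ≠ k → A i k ≤ 0) (hx : 0 ≤ x)
    (hAx : 0 ≤ A *ᵥ x) {a b : ι} (hab : ReflTransGen (fun i k => A i k ≠ 0) a b)
    (ha : x a = 0) : x b = 0 := by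
  induction hab with
  | refl => exact ha
  | @tail c k _ hck hc =>
    have hterm := entry_mul_nonpos_of_eq_zero hoff hx hc
    have hterms := (Finset.sum_eq_zero_iff_of_nonpos fun l _ => hterm l).1
      (le_antisymm (Finset.sum_nonpos fun l _ => hterm l) (hAx c))
    exact (mul_eq_zero.1 (hterms k (Finset.mem_univ k))).resolve_left hck

theorem det_ne_zero_of_rowSum_pos [DecidableEq ι] (hoff : ∀ i k, i ≠ k → A i k ≤ 0)
    (hrow : ∀ i, 0 < ∑ k, A i k) : A.det ≠ 0 := by
  refine det_ne_zero_of_sum_row_lt_diag fun i => ?_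
  have hoff' (k : ι) (hk : k ∈ Finset.univ.erase i) : A i k ≤ 0 :=
    hoff i k (Finset.ne_of_mem_erase hk).symm
  have hsplit := Finset.add_sum_erase Finset.univ (A i) (Finset.mem_univ i)
  have habs : ∑ k ∈ Finset.univ.erase i, ‖A i k‖ = -∑ k ∈ Finset.univ.erase i, A i k := by
    rw [← Finset.sum_neg_distrib]
    exact Finset.sum_congr rfl fun k hk => Real.norm_of_nonpos (hoff' k hk)
  have hdiag : 0 < A i i := by linarith [hrow i, Finset.sum_nonpos hoff']
  rw [habs, Real.norm_of_nonneg hdiag.le]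
  linarith [hrow i]

theorem inv_apply_pos_of_rowSum_pos [DecidableEq ι] (hoff : ∀ i k, i ≠ k → A i k ≤ 0)
    (hrow : ∀ i, 0 < ∑ k, A i k) (hconn : ∀ i j, ReflTransGen (fun a b => A a b ≠ 0) i j)
    (i j : ι) : 0 < A⁻¹ i j := by
  have hA : A * A⁻¹ = 1 :=
    mul_nonsing_inv A (isUnit_iff_ne_zero.2 (det_ne_zero_of_rowSum_pos hoff hrow))
  have hAx : A *ᵥ A⁻¹.col j = Pi.single j 1 := by
    rw [← mulVec_single_one, mulVec_mulVec, hA, one_mulVec]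
  have hAx0 : 0 ≤ A *ᵥ A⁻¹.col j := hAx ▸ Pi.single_nonneg.2 zero_le_one
  have hx := nonneg_of_mulVec_nonneg hoff hrow hAx0
  refine (hx i).lt_of_ne fun hi => ?_
  have hj := eq_zero_of_reflTransGen hoff hx hAx0 (hconn i j) hi.symm
  have hAxj : (A *ᵥ A⁻¹.col j) j ≤ 0 :=
    Finset.sum_nonpos fun l _ => entry_mul_nonpos_of_eq_zero hoff hx hj l
  rw [hAx, Pi.single_eq_same] at hAxj
  exact one_pos.not_ge hAxj

end Matrix

namespace Fin

variable {n : ℕ}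

theorem sum_ite_val_eq_s7 (m : ℕ) (b : ℝ) :
    ∑ k : Fin n, (if k.val = m then b else 0) = if m < n then b else 0 := by
  simp [Fin.sum_univ_eq_sum_range (fun k => if k = m then b else 0)]

theorem sum_ite_val_add_one_eq (i : Fin n) (b : ℝ) :
    ∑ k : Fin n, (if k.val + 1 = i.val then b else 0) = if i.val = 0 then 0 else b := by
  obtain ⟨i, hi⟩ := i
  cases i with
  | zero => simp
  | succ m => simp [sum_ite_val_eq_s7, hi.trans' m.lt_succ_self]

end Fin

section Tridiagonal

variable {n : ℕ} {c₁ c b : ℝ}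

theorem triQ_apply_nonpos (hb : 0 ≤ b) {i k : Fin n} (hik : i ≠ k) : triQ n c₁ c b i k ≤ 0 := by
  simp only [triQ, of_apply, if_neg hik]
  split_ifs <;> linarith

theorem triQ_apply_ne_zero_of_adj (hb : b ≠ 0) {a k : Fin n}
    (hak : a.val + 1 = k.val ∨ k.val + 1 = a.val) : triQ n c₁ c b a k ≠ 0 := by
  have : a ≠ k := by rintro rfl; omega
  simp [triQ, this, hak, hb]

theorem triQ_apply_eq (i k : Fin n) : triQ n c₁ c b i k =
    (if k = i then (if i.val = 0 ∨ i.val = n - 1 then c₁ else c) else 0)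
      - (if k.val + 1 = i.val then b else 0) - (if k.val = i.val + 1 then b else 0) := by
  simp only [triQ, of_apply, Fin.ext_iff]
  split_ifs <;> first | (exfalso; omega) | ring

theorem triQ_rowSum (i : Fin n) : ∑ k, triQ n c₁ c b i k =
    (if i.val = 0 ∨ i.val = n - 1 then c₁ else c) - (if i.val = 0 then 0 else b)
      - (if i.val + 1 < n then b else 0) := by
  simp only [triQ_apply_eq, Finset.sum_sub_distrib, Finset.sum_ite_eq', Finset.mem_univ, if_true,
    Fin.sum_ite_val_eq_s7, Fin.sum_ite_val_add_one_eq]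

theorem triQ_rowSum_pos (hb : 0 ≤ b) (hc₁ : b < c₁) (hc : 2 * b < c) (i : Fin n) :
    0 < ∑ k, triQ n c₁ c b i k := by
  rw [triQ_rowSum]
  have := i.isLt
  split_ifs <;> first | (exfalso; omega) | linarith

theorem triQ_reflTransGen (hb : b ≠ 0) (i j : Fin n) :
    ReflTransGen (fun a k => triQ n c₁ c b a k ≠ 0) i j := by
  have hsucc {a : Fin n} (ha : ¬IsMax a) : a.val + 1 = (Order.succ a).val :=
    Nat.covBy_iff_add_one_eq.1 (Fin.covBy_iff.1 (Order.covBy_succ_of_not_isMax ha))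
  exact reflTransGen_of_succ _
    (fun a ha => triQ_apply_ne_zero_of_adj hb (.inl (hsucc (not_isMax_of_lt ha.2))))
    (fun a ha => triQ_apply_ne_zero_of_adj hb (.inr (hsucc (not_isMax_of_lt ha.2))))

theorem triQ_inv_apply_pos (hb : 0 < b) (hc₁ : b < c₁) (hc : 2 * b < c) (i j : Fin n) :
    0 < (triQ n c₁ c b)⁻¹ i j :=
  inv_apply_pos_of_rowSum_pos (fun _ _ => triQ_apply_nonpos hb.le)
    (triQ_rowSum_pos hb.le hc₁ hc) (triQ_reflTransGen hb.ne') i j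

end Tridiagonal

theorem stmt_7_general (n : ℕ) (φ γ : ℝ) (hφ : 0 < φ) (hφ1 : φ < 1) (hγ : 0 < γ)
    (c₁ c : ℝ) (hc₁ : c₁ = (1 + γ) / φ) (hc : c = c₁ + φ) :
    ∀ t j : Fin n, 0 < (triQ n c₁ c 1)⁻¹ t j := by
  have hc₁φ : c₁ * φ = 1 + γ := by rw [hc₁]; field_simp
  have hc₁_gt : 1 < c₁ := by nlinarith
  have hc_gt : 2 < c := by nlinarith [sq_nonneg (1 - φ)]
  exact triQ_inv_apply_pos one_pos (by linarith) (by linarith)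

/-- if `0 < φ < 1` then every entry of `Q⁻¹` is positive, where `Q`
has diagonal `(c₁, c, …, c, c₁)` with `c₁ = (1+γ)/φ`, `c = c₁ + φ`, and
off-diagonal entries `-1`. -/
theorem stmt_7 (n : ℕ) (hn : 2 ≤ n) (φ γ : ℝ) (hφ : 0 < φ) (hφ1 : φ < 1) (hγ : 0 < γ)
    (c₁ c : ℝ) (hc₁ : c₁ = (1 + γ) / φ) (hc : c = c₁ + φ) :
    ∀ t j : Fin n, 0 < (triQ n c₁ c 1)⁻¹ t j :=
  stmt_7_general n φ γ hφ hφ1 hγ c₁ c hc₁ hc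
end

section
/- If 0 < φ < 1, the row sums s_t of Q^{-1} satisfy s_t > 1/(c₁ - φ) for all t, where c₁ = (1+γ)/φ. -/
open Matrix

/-!
`Q` has nonpositive off-diagonal entries and row sums in `(0, c₁ - φ)`: `c₁ - 1` in the two end
rows and `c - 2 = c₁ + φ - 2` in the others. Positive row sums make such a matrix strictly
diagonally dominant, hence invertible. With `m = c₁ - φ`, the vector
`u = Q⁻¹ 𝟙 - 𝟙 / m` satisfies `(Q u)_t = 1 - (∑_j Q_tj) / m > 0`, and a minimum principle turns
`Q u > 0` into `u > 0`: at an index `k` where `u` is minimal, `(Q u)_k ≤ (∑_j Q_kj) u_k`.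
-/

namespace Matrix

variable {ι : Type*} [Fintype ι]

theorem pos_of_offDiag_nonpos_of_mulVec_pos {R : Type*} [CommRing R] [LinearOrder R]
    [IsStrictOrderedRing R] {A : Matrix ι ι R} (hoff : ∀ i j, i ≠ j → A i j ≤ 0)
    (hrow : ∀ i, 0 ≤ ∑ j, A i j) {u : ι → R} (hAu : ∀ i, 0 < (A *ᵥ u) i) (i : ι) :
    0 < u i := by
  obtain ⟨k, -, hk⟩ := Finset.exists_min_image Finset.univ u ⟨i, Finset.mem_univ i⟩
  have hAuk : (A *ᵥ u) k ≤ (∑ j, A k j) * u k := by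
    rw [Finset.sum_mul]
    refine Finset.sum_le_sum fun j _ => ?_
    rcases eq_or_ne k j with rfl | hkj
    · rfl
    · exact mul_le_mul_of_nonpos_left (hk j (Finset.mem_univ j)) (hoff k j hkj)
  exact (pos_of_mul_pos_right ((hAu k).trans_le hAuk) (hrow k)).trans_le
    (hk i (Finset.mem_univ i))

variable [DecidableEq ι]

theorem det_ne_zero_of_offDiag_nonpos_of_sum_row_pos {A : Matrix ι ι ℝ}
    (hoff : ∀ i j, i ≠ j → A i j ≤ 0) (hrow : ∀ i, 0 < ∑ j, A i j) : A.det ≠ 0 := by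
  refine det_ne_zero_of_sum_row_lt_diag fun k => ?_
  calc ∑ j ∈ Finset.univ.erase k, ‖A k j‖ = -∑ j ∈ Finset.univ.erase k, A k j := by
        rw [← Finset.sum_neg_distrib]
        refine Finset.sum_congr rfl fun j hj => ?_
        rw [Real.norm_of_nonpos (hoff k j (Finset.ne_of_mem_erase hj).symm)]
    _ < A k k := by
        linarith [hrow k, Finset.add_sum_erase Finset.univ (A k) (Finset.mem_univ k)]
    _ ≤ ‖A k k‖ := Real.le_norm_self _

theorem one_div_lt_sum_inv_row {A : Matrix ι ι ℝ} {m : ℝ}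
    (hoff : ∀ i j, i ≠ j → A i j ≤ 0) (hrow : ∀ i, 0 < ∑ j, A i j)
    (hrow_lt : ∀ i, ∑ j, A i j < m) (i : ι) : 1 / m < ∑ j, A⁻¹ i j := by
  have hdet : IsUnit A.det := (det_ne_zero_of_offDiag_nonpos_of_sum_row_pos hoff hrow).isUnit
  have hAu : A *ᵥ (A⁻¹ *ᵥ 1 - (1 / m) • 1) = 1 - (1 / m) • A *ᵥ 1 := by
    rw [mulVec_sub, mulVec_mulVec, mul_nonsing_inv A hdet, one_mulVec, mulVec_smul]
  have hu := pos_of_offDiag_nonpos_of_mulVec_pos hoff (fun i => (hrow i).le)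
    (u := A⁻¹ *ᵥ 1 - (1 / m) • 1) (fun k => ?_) i
  · simpa [mulVec, dotProduct] using hu
  · have hm : 0 < m := (hrow k).trans (hrow_lt k)
    rw [hAu]
    simpa [mulVec, dotProduct, inv_mul_lt_one₀ hm] using hrow_lt k

end Matrix

theorem Finset.sum_range_ite_add_one_eq {M : Type*} [AddCommMonoid M] {n t : ℕ} (ht : t ≤ n)
    (x : M) : ∑ k ∈ Finset.range n, (if k + 1 = t then x else 0) = if 0 < t then x else 0 := by
  rcases t with _ | t
  · simp
  · simp [Nat.lt_of_succ_le ht]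

section triQ

variable {n : ℕ} {c₁ c b : ℝ}

theorem triQ_nonpos_of_ne (hb : 0 ≤ b) {i j : Fin n} (h : i ≠ j) : triQ n c₁ c b i j ≤ 0 := by
  simp only [triQ, of_apply, if_neg h]
  split_ifs <;> linarith

theorem triQ_apply_eq_add (t j : Fin n) :
    triQ n c₁ c b t j = (if t = j then (if t.val = 0 ∨ t.val = n - 1 then c₁ else c) else 0)
      + (if t.val + 1 = j.val then -b else 0) + (if j.val + 1 = t.val then -b else 0) := by
  simp only [triQ, of_apply, Fin.ext_iff]
  split_ifs <;> first | omega | ring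

theorem sum_triQ_row (hn : 2 ≤ n) (t : Fin n) :
    ∑ j, triQ n c₁ c b t j = if t.val = 0 ∨ t.val = n - 1 then c₁ - b else c - 2 * b := by
  simp only [triQ_apply_eq_add, Finset.sum_add_distrib, Finset.sum_ite_eq, Finset.mem_univ,
    if_true]
  rw [Fin.sum_univ_eq_sum_range (fun k => if t.val + 1 = k then -b else 0),
    Fin.sum_univ_eq_sum_range (fun k => if k + 1 = t.val then -b else 0),
    Finset.sum_ite_eq, Finset.sum_range_ite_add_one_eq t.isLt.le]
  simp only [Finset.mem_range]
  have := t.isLt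
  split_ifs <;> first | omega | ring

end triQ

/-- if `0 < φ < 1`, the row sums `s_t` of `Q⁻¹` satisfy
`s_t > 1/(c₁ - φ)`, where `c₁ = (1+γ)/φ`, `c = c₁ + φ` and the off-diagonal
entries of `Q` are `-1`. -/
theorem stmt_8 (n : ℕ) (hn : 2 ≤ n) (φ γ : ℝ) (hφ : 0 < φ) (hφ1 : φ < 1) (hγ : 0 < γ)
    (c₁ c : ℝ) (hc₁ : c₁ = (1 + γ) / φ) (hc : c = c₁ + φ) :
    ∀ t : Fin n, 1 / (c₁ - φ) < ∑ j, (triQ n c₁ c 1)⁻¹ t j := by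
  have hc₁φ : c₁ * φ = 1 + γ := by rw [hc₁, div_mul_cancel₀ _ hφ.ne']
  have hc₁_gt : 1 < c₁ := by nlinarith
  have hc_gt : 2 < c := by nlinarith [sq_nonneg (1 - φ)]
  refine Matrix.one_div_lt_sum_inv_row (fun i j => triQ_nonpos_of_ne zero_le_one)
    (fun t => ?_) (fun t => ?_) <;> rw [sum_triQ_row hn] <;> split_ifs <;> linarith
end

section
/- For φ ≠ 0, the t-th entry of w^opt admits the closed form w_t^opt = { (1-φ)² + b γ (1-φ)(v_t + v_{n-t+1}) } / { (1-φ)² + γ }, where b = φ/|φ| and v_t is as defined from the tridiagonal inverse; for φ = 0, w_t^opt = 1/(1+γ). -/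
/-!
Multiplying by `σ_η²`, `w^opt = 1 - γ M⁻¹ 1` with `M = γ I + Λ`, which is strictly diagonally
dominant, hence invertible. For `φ = 0`, `M = (1 + γ) I`. For `φ ≠ 0` write `φ = b |φ|`. Since
`M 1 = ((1 - φ)² + γ) 1 + φ (1 - φ) (e₁ + eₙ)`, the closed form amounts to
`M (v + rev v) = |φ| (e₁ + eₙ)`, and since `Λ` commutes with reversal, to `M v = |φ| e₁`.
The sequence `κ_k = v₊ r₊ᵏ - v₋ r₋ᵏ` solves `κ_{k+2} = c κ_{k+1} - κ_k` (`r±` being the roots of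
`r² - c r + 1`) and `κ_1 = c₁ κ_0`, so the interior and last rows of `M` annihilate
`t ↦ bᵗ κ_{n-1-t}` while its first row gives `|φ| κ`. Finally `κ ≠ 0`, for otherwise `M` would
annihilate that vector, whose last entry is `± (r₊ - r₋) ≠ 0`.
-/

open Matrix

theorem ar1Lambda_apply_self {n : ℕ} (φ : ℝ) (i : Fin n) :
    ar1Lambda n φ i i = if i.val = 0 ∨ i.val = n - 1 then 1 else 1 + φ ^ 2 := by
  simp [ar1Lambda]

theorem ar1Lambda_mulVec_apply {n : ℕ} (φ : ℝ) (f : ℕ → ℝ) (i : Fin n) :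
    (ar1Lambda n φ *ᵥ fun j => f j) i =
      (if i.val = 0 ∨ i.val = n - 1 then 1 else 1 + φ ^ 2) * f i
        - φ * ((if i.val + 1 < n then f (i + 1) else 0) + if i.val = 0 then 0 else f (i - 1)) := by
  have hsplit : ∀ (d : ℝ) (k : ℕ), (if (i : ℕ) = k then d
      else if i.val + 1 = k ∨ k + 1 = i.val then -φ else 0) * f k =
      (if k = i then d * f i else 0)
        - φ * ((if k = i + 1 then f (i + 1) else 0) + if k + 1 = i then f k else 0) := by
    intro d k
    split_ifs <;> first | omega | (subst_vars; ring)
  have hprev : ∑ k ∈ Finset.range n, (if k + 1 = i then f k else 0)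
      = if i.val = 0 then 0 else f (i - 1) := by
    obtain ⟨i, hi⟩ := i
    cases i with
    | zero => simp
    | succ s => simp [Finset.sum_ite_eq', show s < n by omega]
  simp only [mulVec, dotProduct, ar1Lambda, of_apply, Fin.ext_iff]
  simp only [hsplit]
  rw [Fin.sum_univ_eq_sum_range (fun k => (if k = (i : ℕ) then _ * f i else 0)
      - φ * ((if k = i + 1 then f (i + 1) else 0) + if k + 1 = i then f k else 0)),
    Finset.sum_sub_distrib, ← Finset.mul_sum, Finset.sum_add_distrib, hprev]
  simp [Finset.sum_ite_eq']

theorem ar1Lambda_mulVec_one_apply {n : ℕ} (hn : 2 ≤ n) (φ : ℝ) (i : Fin n) :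
    (ar1Lambda n φ *ᵥ 1) i = if i.val = 0 ∨ i.val = n - 1 then 1 - φ else (1 - φ) ^ 2 :=
  (ar1Lambda_mulVec_apply φ (fun _ => 1) i).trans (by split_ifs <;> first | omega | ring)

theorem ar1Lambda_zero (n : ℕ) : ar1Lambda n 0 = 1 := by
  ext i j
  simp only [ar1Lambda, of_apply, one_apply]
  split_ifs <;> norm_num

theorem abs_ar1Lambda {n : ℕ} (φ : ℝ) (i j : Fin n) :
    |ar1Lambda n φ i j| = ar1Lambda n (-|φ|) i j := by
  simp only [ar1Lambda, of_apply]
  split_ifs <;> simp [abs_of_pos, sq_abs, add_pos_of_pos_of_nonneg, sq_nonneg]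

theorem ar1Lambda_rev_rev {n : ℕ} (φ : ℝ) (i j : Fin n) :
    ar1Lambda n φ i.rev j.rev = ar1Lambda n φ i j := by
  simp only [ar1Lambda, of_apply, Fin.rev_inj, Fin.val_rev]
  have := i.isLt; have := j.isLt
  congr 1
  · congr 1; apply propext; omega
  · congr 1; apply propext; omega

theorem ar1Lambda_mulVec_comp_rev {n : ℕ} (φ : ℝ) (x : Fin n → ℝ) :
    ar1Lambda n φ *ᵥ (x ∘ Fin.rev) = (ar1Lambda n φ *ᵥ x) ∘ Fin.rev := by
  ext i
  simp only [mulVec, dotProduct, Function.comp_apply]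
  rw [← Equiv.sum_comp Fin.revPerm]
  simp [Fin.revPerm_apply, ← ar1Lambda_rev_rev φ i.rev]

theorem det_smul_one_add_ar1Lambda_ne_zero {n : ℕ} (hn : 2 ≤ n) {φ γ : ℝ} (hφ : |φ| < 1)
    (hγ : 0 < γ) : (γ • 1 + ar1Lambda n φ).det ≠ 0 := by
  refine det_ne_zero_of_sum_row_lt_diag fun k => ?_
  -- entrywise, `|Λ(φ)| = Λ(-|φ|)`, so the off-diagonal row sums are read off `Λ(-|φ|) *ᵥ 1`
  have hoff : ∑ j ∈ Finset.univ.erase k, ‖(γ • 1 + ar1Lambda n φ) k j‖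
      = (ar1Lambda n (-|φ|) *ᵥ 1) k - ar1Lambda n (-|φ|) k k := by
    rw [Finset.sum_congr rfl fun j hj => by
      rw [Matrix.add_apply, Matrix.smul_apply, one_apply_ne' (Finset.ne_of_mem_erase hj),
        smul_zero, zero_add, Real.norm_eq_abs, abs_ar1Lambda],
      Finset.sum_erase_eq_sub (Finset.mem_univ k)]
    simp [mulVec, dotProduct]
  rw [hoff, ar1Lambda_mulVec_one_apply hn, ar1Lambda_apply_self, Matrix.add_apply,
    ar1Lambda_apply_self, Matrix.smul_apply, one_apply_eq, smul_eq_mul, mul_one, Real.norm_eq_abs]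
  have := abs_nonneg φ
  split_ifs
  · rw [abs_of_pos (a := γ + 1) (by linarith)]; linarith
  · rw [abs_of_pos (a := γ + (1 + φ ^ 2)) (by positivity), neg_sq, sq_abs]
    nlinarith [sq_nonneg (1 - |φ|), sq_abs φ]

theorem smul_inv_smul_one_add_smul_mulVec {ι : Type*} [Fintype ι] [DecidableEq ι]
    (L : Matrix ι ι ℝ) {σε ση γ : ℝ} (hσε : σε ≠ 0) (hση : ση ≠ 0) (hγ : γ = ση ^ 2 / σε ^ 2)
    (hL : IsUnit (γ • 1 + L).det) (x : ι → ℝ) :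
    (σε ^ 2)⁻¹ • (((σε ^ 2)⁻¹ • (1 : Matrix ι ι ℝ) + (ση ^ 2)⁻¹ • L)⁻¹ *ᵥ x) =
      γ • ((γ • 1 + L)⁻¹ *ᵥ x) := by
  have hση2 : ση ^ 2 ≠ 0 := pow_ne_zero 2 hση
  have hΩ : (σε ^ 2)⁻¹ • (1 : Matrix ι ι ℝ) + (ση ^ 2)⁻¹ • L = (ση ^ 2)⁻¹ • (γ • 1 + L) := by
    rw [smul_add, smul_smul, hγ]
    congr 2
    field_simp
  have hinv : ((ση ^ 2)⁻¹ • (γ • 1 + L))⁻¹ = ση ^ 2 • (γ • 1 + L)⁻¹ :=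
    inv_eq_right_inv (by rw [smul_mul_smul_comm, mul_nonsing_inv _ hL, inv_mul_cancel₀ hση2,
      one_smul])
  rw [hΩ, hinv, smul_mulVec, smul_smul, hγ]
  congr 1
  field_simp

theorem quadratic_roots_add_mul_ne {c rp rm : ℝ} (hc : 2 < c)
    (hrp : rp = (c + Real.sqrt (c ^ 2 - 4)) / 2) (hrm : rm = (c - Real.sqrt (c ^ 2 - 4)) / 2) :
    rp + rm = c ∧ rp * rm = 1 ∧ rp ≠ rm := by
  have hΔ : 0 < c ^ 2 - 4 := by nlinarith
  refine ⟨by rw [hrp, hrm]; ring, ?_, ?_⟩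
  · rw [hrp, hrm]
    linear_combination (-1 / 4 : ℝ) * Real.sq_sqrt hΔ.le
  · rw [hrp, hrm]
    linarith [Real.sqrt_pos.mpr hΔ]

theorem two_root_seq_add_two {c rp rm : ℝ} (hsum : rp + rm = c) (hprod : rp * rm = 1)
    {y : ℕ → ℝ} {p q : ℝ} (hy : ∀ k, y k = p * rp ^ k - q * rm ^ k) (k : ℕ) :
    y (k + 2) = c * y (k + 1) - y k := by
  simp only [hy]
  linear_combination (p * rp ^ k * rp - q * rm ^ k * rm) * hsum - (p * rp ^ k - q * rm ^ k) * hprod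

theorem two_root_seq_one {a c₁ rp rm : ℝ} (hsum : rp + rm = c₁ + a) {y : ℕ → ℝ}
    (hy : ∀ k, y k = (rp - a) * rp ^ k - (rm - a) * rm ^ k) : y 1 = c₁ * y 0 := by
  simp only [hy]
  linear_combination (rp - rm) * hsum

theorem two_root_seq_sub {a c₁ rp rm : ℝ} (hsum : rp + rm = c₁ + a) (hprod : rp * rm = 1)
    {y : ℕ → ℝ} (hy : ∀ k, y k = (rp - a) * rp ^ k - (rm - a) * rm ^ k) (N : ℕ) :
    c₁ * y (N + 1) - y N = (rp - a) ^ 2 * rp ^ (N + 1) - (rm - a) ^ 2 * rm ^ (N + 1) := by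
  simp only [hy]
  linear_combination ((rm - a) * rm ^ N * rm - (rp - a) * rp ^ N * rp) * hsum
    + ((rp - a) * rp ^ N - (rm - a) * rm ^ N) * hprod

theorem smul_one_add_ar1Lambda_mulVec_pow_mul {n : ℕ} (hn : 2 ≤ n) {φ γ a b c₁ : ℝ}
    (hb : b ^ 2 = 1) (hφ : φ = b * a) (hc₁ : a * c₁ = 1 + γ) {y : ℕ → ℝ}
    (hrec : ∀ k, y (k + 2) = (c₁ + a) * y (k + 1) - y k) (hy : y 1 = c₁ * y 0) :
    (γ • 1 + ar1Lambda n φ) *ᵥ (fun t : Fin n => b ^ t.val * y (n - 1 - t)) =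
      fun i : Fin n => if i.val = 0 then a * (c₁ * y (n - 1) - y (n - 2)) else 0 := by
  subst hφ
  ext i
  rw [add_mulVec, smul_mulVec, one_mulVec, Pi.add_apply, Pi.smul_apply, smul_eq_mul,
    ar1Lambda_mulVec_apply (b * a) (fun t => b ^ t * y (n - 1 - t))]
  have hi := i.isLt
  by_cases hi0 : i.val = 0
  · rw [if_pos (Or.inl hi0), if_pos (by omega), if_pos hi0, if_pos hi0, hi0,
      show n - 1 - (0 + 1) = n - 2 by omega]
    linear_combination (-a * y (n - 2)) * hb - y (n - 1) * hc₁
  by_cases hin : i.val = n - 1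
  · obtain ⟨m, rfl⟩ : ∃ m, n = m + 2 := ⟨n - 2, by omega⟩
    rw [if_pos (Or.inr hin), if_neg (by omega), if_neg hi0, if_neg hi0, hin,
      show m + 2 - 1 - (m + 2 - 1 - 1) = 1 by omega, show m + 2 - 1 - (m + 2 - 1) = 0 by omega,
      show m + 2 - 1 - 1 = m by omega, show m + 2 - 1 = m + 1 by omega, hy]
    linear_combination (-(b ^ (m + 1)) * y 0) * hc₁
  · obtain ⟨s, m, hs, rfl⟩ : ∃ s m, i.val = s + 1 ∧ n = s + m + 3 :=
      ⟨i.val - 1, n - 3 - (i.val - 1), by omega, by omega⟩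
    rw [if_neg (by omega), if_pos (by omega), if_neg hi0, if_neg hi0, hs,
      show s + m + 3 - 1 - (s + 1) = m + 1 by omega, show s + m + 3 - 1 - (s + 1 + 1) = m by omega,
      show s + m + 3 - 1 - (s + 1 - 1) = m + 2 by omega, show s + 1 - 1 = s by omega, hrec]
    linear_combination (a ^ 2 * b ^ (s + 1) * y (m + 1) - a * b ^ (s + 1) * y m) * hb
      - b ^ (s + 1) * y (m + 1) * hc₁

theorem smul_one_add_ar1Lambda_mulVec_comp_rev {n : ℕ} (γ φ : ℝ) (x : Fin n → ℝ) :
    (γ • 1 + ar1Lambda n φ) *ᵥ (x ∘ Fin.rev) = ((γ • 1 + ar1Lambda n φ) *ᵥ x) ∘ Fin.rev := by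
  simp only [add_mulVec, smul_mulVec, one_mulVec, ar1Lambda_mulVec_comp_rev]
  rfl

theorem smul_one_add_ar1Lambda_mulVec_add_comp_rev {n : ℕ} (hn : 2 ≤ n) {γ φ a : ℝ}
    {x : Fin n → ℝ} (hx : (γ • 1 + ar1Lambda n φ) *ᵥ x = fun i => if i.val = 0 then a else 0) :
    (γ • 1 + ar1Lambda n φ) *ᵥ (x + x ∘ Fin.rev) =
      fun i => if i.val = 0 ∨ i.val = n - 1 then a else 0 := by
  ext i
  rw [mulVec_add, smul_one_add_ar1Lambda_mulVec_comp_rev, hx]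
  simp only [Pi.add_apply, Function.comp_apply, Fin.val_rev]
  split_ifs <;> first | omega | simp

theorem smul_one_add_ar1Lambda_mulVec_eq_one {n : ℕ} (hn : 2 ≤ n) {γ φ a b : ℝ}
    (hφ : φ = b * a) (hD : (1 - φ) ^ 2 + γ ≠ 0) {g : Fin n → ℝ}
    (hg : (γ • 1 + ar1Lambda n φ) *ᵥ g = fun i => if i.val = 0 ∨ i.val = n - 1 then a else 0) :
    (γ • 1 + ar1Lambda n φ) *ᵥ (fun t => (1 - b * (1 - φ) * g t) / ((1 - φ) ^ 2 + γ)) = 1 := by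
  have hu : (fun t => (1 - b * (1 - φ) * g t) / ((1 - φ) ^ 2 + γ))
      = ((1 - φ) ^ 2 + γ)⁻¹ • (1 - (b * (1 - φ)) • g) := by
    ext t; simp [div_eq_inv_mul]
  ext i
  rw [hu, mulVec_smul, mulVec_sub, mulVec_smul, hg, add_mulVec, smul_mulVec, one_mulVec]
  simp only [Pi.smul_apply, Pi.sub_apply, Pi.add_apply, Pi.one_apply, smul_eq_mul,
    ar1Lambda_mulVec_one_apply hn]
  field_simp
  split_ifs
  · linear_combination (1 - φ) * hφ
  · ring

theorem smul_one_add_ar1Lambda_mulVec_eq_of_two_root_seq {n : ℕ} (hn : 2 ≤ n)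
    {φ γ a b c₁ rp rm κ : ℝ} (hφ : |φ| < 1) (hγ : 0 < γ) (hb : b ^ 2 = 1) (hφb : φ = b * a)
    (hc₁ : a * c₁ = 1 + γ) (hsum : rp + rm = c₁ + a) (hprod : rp * rm = 1) (hne : rp ≠ rm)
    {y : ℕ → ℝ} (hy : ∀ k, y k = (rp - a) * rp ^ k - (rm - a) * rm ^ k)
    (hκ : κ = (rp - a) ^ 2 * rp ^ (n - 1) - (rm - a) ^ 2 * rm ^ (n - 1)) :
    (γ • 1 + ar1Lambda n φ) *ᵥ (fun t : Fin n => b ^ t.val * y (n - 1 - t) / κ) =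
      fun i => if i.val = 0 then a else 0 := by
  obtain ⟨N, rfl⟩ : ∃ N, n = N + 2 := ⟨n - 2, by omega⟩
  have hκy : c₁ * y (N + 2 - 1) - y (N + 2 - 2) = κ := by
    rw [hκ, show N + 2 - 1 = N + 1 by omega, show N + 2 - 2 = N by omega,
      two_root_seq_sub hsum hprod hy]
  have hY := smul_one_add_ar1Lambda_mulVec_pow_mul hn hb hφb hc₁
    (two_root_seq_add_two hsum hprod hy) (two_root_seq_one hsum hy)
  rw [hκy] at hY
  have hκ0 : κ ≠ 0 := by
    intro h0
    have hlast := congrFun (eq_zero_of_mulVec_eq_zero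
      (det_smul_one_add_ar1Lambda_ne_zero hn hφ hγ) (hY.trans (by ext i; simp [h0])))
      (Fin.last (N + 1))
    have hb0 : b ≠ 0 := by rintro rfl; norm_num at hb
    simp only [Fin.val_last, show N + 2 - 1 - (N + 1) = 0 by omega, hy, pow_zero,
      Pi.zero_apply] at hlast
    exact hne (by simpa [hb0, sub_eq_zero] using hlast)
  have hv : (fun t : Fin (N + 2) => b ^ t.val * y (N + 2 - 1 - t) / κ)
      = κ⁻¹ • fun t : Fin (N + 2) => b ^ t.val * y (N + 2 - 1 - t) := by
    ext t; simp [div_eq_inv_mul]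
  rw [hv, mulVec_smul, hY]
  ext i
  simp only [Pi.smul_apply, smul_eq_mul, mul_ite, mul_zero]
  congr 1
  field_simp

/-- Indices are 0-based: the paper's `v_t = b^{t-1} κ_{n-t} / κ` is
`v t = b ^ t * κf (n - 1 - t) / κ`, and its `v_{n-t+1}` is `v t.rev`. -/
theorem stmt_10 (n : ℕ) (hn : 2 ≤ n) (φ γ : ℝ) (hφ : |φ| < 1) (hγ : 0 < γ)
    (σε ση : ℝ) (hσε : 0 < σε) (hση : 0 < ση) (hγdef : γ = ση ^ 2 / σε ^ 2)
    (Ω : Matrix (Fin n) (Fin n) ℝ)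
    (hΩ : Ω = (σε ^ 2)⁻¹ • (1 : Matrix (Fin n) (Fin n) ℝ) + (ση ^ 2)⁻¹ • ar1Lambda n φ)
    (wopt : Fin n → ℝ)
    (hwopt : wopt = (1 : Fin n → ℝ) - (σε ^ 2)⁻¹ • (Ω⁻¹ *ᵥ (1 : Fin n → ℝ)))
    (b c₁ c : ℝ) (hb : b = φ / |φ|) (hc₁ : c₁ = (1 + γ) / |φ|) (hc : c = c₁ + |φ|)
    (rp rm : ℝ) (hrp : rp = (c + Real.sqrt (c ^ 2 - 4)) / 2)
    (hrm : rm = (c - Real.sqrt (c ^ 2 - 4)) / 2)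
    (vp vm : ℝ) (hvp : vp = rp - |φ|) (hvm : vm = rm - |φ|)
    (κf : ℕ → ℝ) (hκf : ∀ t, κf t = vp * rp ^ t - vm * rm ^ t)
    (κ : ℝ) (hκ : κ = vp ^ 2 * rp ^ (n - 1) - vm ^ 2 * rm ^ (n - 1))
    (v : Fin n → ℝ) (hv : ∀ t : Fin n, v t = b ^ t.val * κf (n - 1 - t.val) / κ) :
    (φ ≠ 0 → ∀ t : Fin n,
        wopt t = ((1 - φ) ^ 2 + b * γ * (1 - φ) * (v t + v t.rev)) / ((1 - φ) ^ 2 + γ)) ∧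
    (φ = 0 → ∀ t : Fin n, wopt t = 1 / (1 + γ)) := by
  have hdet : IsUnit (γ • 1 + ar1Lambda n φ).det :=
    (det_smul_one_add_ar1Lambda_ne_zero hn hφ hγ).isUnit
  have hw : wopt = 1 - γ • ((γ • 1 + ar1Lambda n φ)⁻¹ *ᵥ 1) := by
    rw [hwopt, hΩ, smul_inv_smul_one_add_smul_mulVec _ hσε.ne' hση.ne' hγdef hdet]
  have hsolve : ∀ u, (γ • 1 + ar1Lambda n φ) *ᵥ u = 1 → wopt = 1 - γ • u := fun u hu => by
    rw [hw, ← hu, mulVec_mulVec, nonsing_inv_mul _ hdet, one_mulVec]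
  refine ⟨fun hφ0 t => ?_, fun hφ0 t => ?_⟩
  · have ha : 0 < |φ| := abs_pos.mpr hφ0
    have hb2 : b ^ 2 = 1 := by rw [hb, div_pow, sq_abs, div_self (pow_ne_zero 2 hφ0)]
    have hφb : φ = b * |φ| := by rw [hb, div_mul_cancel₀ _ ha.ne']
    have hc₁' : |φ| * c₁ = 1 + γ := by rw [hc₁, mul_div_cancel₀ _ ha.ne']
    -- `|φ| (c - 2) = (1 - |φ|)² + γ`
    have hc2 : 2 < c := by nlinarith [sq_nonneg (1 - |φ|)]
    obtain ⟨hsum, hprod, hne⟩ := quadratic_roots_add_mul_ne hc2 hrp hrm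
    have hvM : (γ • 1 + ar1Lambda n φ) *ᵥ v = fun i => if i.val = 0 then |φ| else 0 := by
      rw [funext hv]
      exact smul_one_add_ar1Lambda_mulVec_eq_of_two_root_seq hn hφ hγ hb2 hφb hc₁'
        (hc ▸ hsum) hprod hne (fun k => by rw [hκf, hvp, hvm]) (by rw [hκ, hvp, hvm])
    have hu := smul_one_add_ar1Lambda_mulVec_eq_one hn hφb (by positivity)
      (smul_one_add_ar1Lambda_mulVec_add_comp_rev hn hvM)
    rw [hsolve _ hu]
    simp only [Pi.sub_apply, Pi.one_apply, Pi.smul_apply, Pi.add_apply, Function.comp_apply,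
      smul_eq_mul]
    field_simp
    ring
  · subst hφ0
    have hu : (γ • 1 + ar1Lambda n 0) *ᵥ ((γ + 1)⁻¹ • 1) = 1 := by
      have hM : γ • (1 : Matrix (Fin n) (Fin n) ℝ) + ar1Lambda n 0 = (γ + 1) • 1 := by
        rw [ar1Lambda_zero, add_smul, one_smul]
      rw [hM, smul_mulVec, mulVec_smul, one_mulVec, smul_smul, mul_inv_cancel₀ (by positivity),
        one_smul]
    rw [hsolve _ hu]
    simp only [Pi.sub_apply, Pi.one_apply, Pi.smul_apply, smul_eq_mul]
    field_simp
    ring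
end

section
/- For 0 ≤ φ < 1, every entry of w^opt satisfies 1 - B₁ ≤ w_t^opt ≤ 1 - B₂, where B₁ = γ/((1-φ)² + γ) and B₂ = γ/(1 - φ² + γ); moreover 0 < B₂ ≤ B₁ < 1 in this range. -/
/-!
Write `Ω = a • 1 + b • Λ` with `a = σ_ε⁻²`, `b = σ_η⁻²`. Since `φ ≥ 0`, the off-diagonal entries of
`Ω` are nonpositive, and its row sums lie between `a + b (1-φ)²` (interior rows) and
`a + b (1-φ²)` (boundary rows). For such a matrix the solution of `Ω u = 1` obeys a discrete
maximum principle: at an index where `u` is maximal, resp. minimal, row `t` of `Ω u = 1` reads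
`1 ≥ (row sum) u_t`, resp. `1 ≤ (row sum) u_t`. Hence every `u_t = (Ω⁻¹ 1)_t` lies between the
reciprocals of the two row-sum bounds, and `w_t = 1 - a u_t` lies between `1 - B₁` and `1 - B₂`.
Invertibility of `Ω` is strict diagonal dominance.
-/

open Matrix

open Finset

namespace Matrix

theorem smul_one_add_smul_apply_of_ne {ι : Type*} [DecidableEq ι] {M : Matrix ι ι ℝ} (a b : ℝ)
    {i j : ι} (hij : i ≠ j) : (a • (1 : Matrix ι ι ℝ) + b • M) i j = b * M i j := by
  simp [one_apply_ne hij]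

variable {ι : Type*} [Fintype ι] {M : Matrix ι ι ℝ}

theorem sum_row_mul_le_mulVec_of_forall_le (hM : ∀ i j, i ≠ j → M i j ≤ 0) {u : ι → ℝ} {t : ι}
    (ht : ∀ s, u s ≤ u t) : (∑ j, M t j) * u t ≤ (M *ᵥ u) t := by
  rw [sum_mul]
  refine sum_le_sum fun j _ => ?_
  rcases eq_or_ne j t with rfl | hjt
  · exact le_rfl
  · exact mul_le_mul_of_nonpos_left (ht j) (hM t j hjt.symm)

theorem mulVec_le_sum_row_mul_of_forall_ge (hM : ∀ i j, i ≠ j → M i j ≤ 0) {u : ι → ℝ} {t : ι}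
    (ht : ∀ s, u t ≤ u s) : (M *ᵥ u) t ≤ (∑ j, M t j) * u t := by
  rw [sum_mul]
  refine sum_le_sum fun j _ => ?_
  rcases eq_or_ne j t with rfl | hjt
  · exact le_rfl
  · exact mul_le_mul_of_nonpos_left (ht j) (hM t j hjt.symm)

theorem apply_le_inv_of_mulVec_eq_one (hM : ∀ i j, i ≠ j → M i j ≤ 0) {c : ℝ} (hc : 0 < c)
    (hrow : ∀ i, c ≤ ∑ j, M i j) {u : ι → ℝ} (hu : M *ᵥ u = 1) (s : ι) : u s ≤ c⁻¹ := by
  have : Nonempty ι := ⟨s⟩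
  obtain ⟨t, ht⟩ := Finite.exists_max u
  refine (ht s).trans ?_
  rcases le_or_gt (u t) 0 with hut | hut
  · exact hut.trans (inv_pos.2 hc).le
  have : c * u t ≤ 1 :=
    calc c * u t ≤ (∑ j, M t j) * u t := by gcongr; exact hrow t
      _ ≤ (M *ᵥ u) t := sum_row_mul_le_mulVec_of_forall_le hM ht
      _ = 1 := by rw [hu, Pi.one_apply]
  rw [← one_div, le_div_iff₀ hc]
  linarith

theorem inv_le_apply_of_mulVec_eq_one (hM : ∀ i j, i ≠ j → M i j ≤ 0) {c : ℝ}
    (hrow_nonneg : ∀ i, 0 ≤ ∑ j, M i j) (hrow : ∀ i, ∑ j, M i j ≤ c) {u : ι → ℝ}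
    (hu : M *ᵥ u = 1) (s : ι) : c⁻¹ ≤ u s := by
  have : Nonempty ι := ⟨s⟩
  obtain ⟨t, ht⟩ := Finite.exists_min u
  refine le_trans ?_ (ht s)
  have h1 : 1 ≤ (∑ j, M t j) * u t :=
    calc (1 : ℝ) = (M *ᵥ u) t := by rw [hu, Pi.one_apply]
      _ ≤ (∑ j, M t j) * u t := mulVec_le_sum_row_mul_of_forall_ge hM ht
  have hut : 0 < u t := by
    by_contra! hut
    linarith [mul_nonpos_of_nonneg_of_nonpos (hrow_nonneg t) hut]
  have hc : 1 ≤ c * u t := h1.trans (by gcongr; exact hrow t)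
  have hc_pos : 0 < c := pos_of_mul_pos_left (one_pos.trans_le hc) hut.le
  rw [← one_div, div_le_iff₀ hc_pos]
  linarith

theorem det_ne_zero_of_offDiag_nonpos_of_sum_row_pos_s11 [DecidableEq ι]
    (hM : ∀ i j, i ≠ j → M i j ≤ 0) (hrow : ∀ i, 0 < ∑ j, M i j) : M.det ≠ 0 := by
  refine det_ne_zero_of_sum_row_lt_diag fun k => ?_
  have hoff : ∑ j ∈ univ.erase k, ‖M k j‖ = M k k - ∑ j, M k j := by
    rw [sum_congr rfl fun j hj => Real.norm_of_nonpos (hM k j (ne_of_mem_erase hj).symm),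
      sum_neg_distrib, sum_erase_eq_sub (mem_univ k)]
    ring
  rw [hoff]
  linarith [hrow k, Real.le_norm_self (M k k)]

theorem sum_row_smul_one_add_smul [DecidableEq ι] (a b : ℝ) (i : ι) :
    ∑ j, (a • (1 : Matrix ι ι ℝ) + b • M) i j = a + b * ∑ j, M i j := by
  simp [sum_add_distrib, one_apply, mul_sum]

end Matrix

theorem Fin.sum_ite_eq_val {R : Type*} [AddCommMonoid R] (n m : ℕ) (c : R) :
    ∑ j : Fin n, (if m = (j : ℕ) then c else 0) = if m < n then c else 0 := by
  rw [Fin.sum_univ_eq_sum_range (fun j => if m = j then c else 0), sum_ite_eq]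
  simp only [mem_range]

section AR1

variable {n : ℕ} {φ : ℝ}

theorem ar1Lambda_apply_nonpos (hφ : 0 ≤ φ) {i j : Fin n} (hij : i ≠ j) :
    ar1Lambda n φ i j ≤ 0 := by
  simp only [ar1Lambda, of_apply, if_neg hij]
  split_ifs <;> linarith

theorem sum_row_ar1Lambda (t : Fin n) :
    ∑ j, ar1Lambda n φ t j =
      (if t.val = 0 ∨ t.val = n - 1 then 1 else 1 + φ ^ 2)
        + (if t.val + 1 < n then -φ else 0) + (if 0 < t.val then -φ else 0) := by
  have hsplit : ∀ j : Fin n, ar1Lambda n φ t j =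
      (if t = j then (if t.val = 0 ∨ t.val = n - 1 then 1 else 1 + φ ^ 2) else 0)
        + (if t.val + 1 = j.val then -φ else 0)
        + (if 0 < t.val then (if t.val - 1 = j.val then -φ else 0) else 0) := by
    intro j
    simp only [ar1Lambda, of_apply, Fin.ext_iff]
    split_ifs <;> first | ring1 | (exfalso; omega)
  have ht : t.val - 1 < n := by omega
  simp only [hsplit, sum_add_distrib, sum_ite_eq, mem_univ, if_true, sum_ite_irrel,
    Fin.sum_ite_eq_val, ht, sum_const_zero]

theorem sum_row_ar1Lambda_mem_Icc (hn : 2 ≤ n) (hφ0 : 0 ≤ φ) (hφ1 : φ ≤ 1) (t : Fin n) :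
    ∑ j, ar1Lambda n φ t j ∈ Set.Icc ((1 - φ) ^ 2) (1 - φ ^ 2) := by
  rw [sum_row_ar1Lambda, Set.mem_Icc]
  have ht := t.isLt
  by_cases h0 : t.val = 0
  · rw [if_pos (Or.inl h0), if_pos (by omega), if_neg (by omega)]
    constructor <;> nlinarith
  by_cases h1 : t.val = n - 1
  · rw [if_pos (Or.inr h1), if_neg (by omega), if_pos (by omega)]
    constructor <;> nlinarith
  · rw [if_neg (by tauto), if_pos (by omega), if_pos (by omega)]
    constructor <;> nlinarith

theorem inv_mulVec_one_mem_Icc (hn : 2 ≤ n) (hφ0 : 0 ≤ φ) (hφ1 : φ ≤ 1) {a b : ℝ}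
    (ha : 0 < a) (hb : 0 ≤ b) (t : Fin n) :
    ((a • 1 + b • ar1Lambda n φ)⁻¹ *ᵥ 1) t ∈
      Set.Icc (a + b * (1 - φ ^ 2))⁻¹ (a + b * (1 - φ) ^ 2)⁻¹ := by
  set Ω : Matrix (Fin n) (Fin n) ℝ := a • 1 + b • ar1Lambda n φ with hΩ
  have hoff : ∀ i j, i ≠ j → Ω i j ≤ 0 := fun i j hij => by
    rw [hΩ, smul_one_add_smul_apply_of_ne a b hij]
    exact mul_nonpos_of_nonneg_of_nonpos hb (ar1Lambda_apply_nonpos hφ0 hij)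
  have hrow : ∀ i, ∑ j, Ω i j ∈ Set.Icc (a + b * (1 - φ) ^ 2) (a + b * (1 - φ ^ 2)) := by
    intro i
    obtain ⟨hlo, hhi⟩ := sum_row_ar1Lambda_mem_Icc hn hφ0 hφ1 i
    rw [hΩ, sum_row_smul_one_add_smul]
    constructor <;> gcongr
  have hlo_pos : 0 < a + b * (1 - φ) ^ 2 := by positivity
  have hdet : Ω.det ≠ 0 :=
    det_ne_zero_of_offDiag_nonpos_of_sum_row_pos_s11 hoff fun i => hlo_pos.trans_le (hrow i).1
  have hu : Ω *ᵥ (Ω⁻¹ *ᵥ 1) = 1 := by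
    rw [mulVec_mulVec, mul_nonsing_inv _ (isUnit_iff_ne_zero.2 hdet), one_mulVec]
  exact ⟨inv_le_apply_of_mulVec_eq_one hoff (fun i => hlo_pos.le.trans (hrow i).1)
      (fun i => (hrow i).2) hu t,
    apply_le_inv_of_mulVec_eq_one hoff hlo_pos (fun i => (hrow i).1) hu t⟩

end AR1

theorem mul_inv_add_mul_eq_div {a b : ℝ} (hb : b ≠ 0) (c : ℝ) :
    a * (a + b * c)⁻¹ = a / b / (c + a / b) := by
  rw [show a + b * c = b * (c + a / b) by field_simp; ring, mul_inv]
  ring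

/-- for `0 ≤ φ < 1`, every entry of `w^opt = 1 - σ_ε⁻² Ω⁻¹ 1`
satisfies `1 - B₁ ≤ w_t^opt ≤ 1 - B₂`, with `B₁ = γ/((1-φ)²+γ)`,
`B₂ = γ/(1-φ²+γ)`; moreover `0 < B₂ ≤ B₁ < 1`. -/
theorem stmt_11 (n : ℕ) (hn : 2 ≤ n) (φ γ : ℝ) (hφ0 : 0 ≤ φ) (hφ1 : φ < 1)
    (σε ση : ℝ) (hσε : 0 < σε) (hση : 0 < ση) (hγ : γ = ση ^ 2 / σε ^ 2)
    (Ω : Matrix (Fin n) (Fin n) ℝ)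
    (hΩ : Ω = (σε ^ 2)⁻¹ • (1 : Matrix (Fin n) (Fin n) ℝ) + (ση ^ 2)⁻¹ • ar1Lambda n φ)
    (wopt : Fin n → ℝ)
    (hwopt : wopt = (1 : Fin n → ℝ) - (σε ^ 2)⁻¹ • (Ω⁻¹ *ᵥ (1 : Fin n → ℝ)))
    (B₁ B₂ : ℝ) (hB₁ : B₁ = γ / ((1 - φ) ^ 2 + γ)) (hB₂ : B₂ = γ / (1 - φ ^ 2 + γ)) :
    (∀ t : Fin n, 1 - B₁ ≤ wopt t ∧ wopt t ≤ 1 - B₂) ∧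
    (0 < B₂ ∧ B₂ ≤ B₁ ∧ B₁ < 1) := by
  have hγ_pos : 0 < γ := by rw [hγ]; positivity
  have hB : ∀ c, (σε ^ 2)⁻¹ * ((σε ^ 2)⁻¹ + (ση ^ 2)⁻¹ * c)⁻¹ = γ / (c + γ) := fun c => by
    rw [hγ, ← inv_div_inv (σε ^ 2), mul_inv_add_mul_eq_div (by positivity)]
  have hφ_sq : 0 < 1 - φ ^ 2 := by nlinarith
  subst hΩ hwopt hB₁ hB₂
  refine ⟨fun t => ?_, div_pos hγ_pos (by linarith), ?_, ?_⟩
  · obtain ⟨hlo, hhi⟩ :=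
      inv_mulVec_one_mem_Icc hn hφ0 hφ1.le (inv_pos.2 (pow_pos hσε 2))
        (inv_pos.2 (pow_pos hση 2)).le t
    rw [← hB, ← hB]
    simp only [Pi.sub_apply, Pi.smul_apply, Pi.one_apply, smul_eq_mul]
    constructor <;> gcongr
  · gcongr
    nlinarith
  · rw [div_lt_one (by positivity)]
    nlinarith
end

section
/- For -1 < φ < 0, every entry of w^opt satisfies 1 - B₂ ≤ w_t^opt ≤ 1 + B₂ - 2B₁, where B₁ = γ/((1-φ)² + γ) and B₂ = γ/(1 - φ² + γ); moreover 0 < B₁ < B₂ < 1 in this range, so w_t^opt can exceed 1. -/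
/-!
Put `u = 1 - w^opt = σ_ε⁻² Ω⁻¹ 1`; multiplying `Ω u = σ_ε⁻² 1` by `σ_η²` gives
`γ u_t + (Λ u)_t = γ`. Row `t` of `Λ` has `k ∈ {1, 2}` neighbours, off-diagonal entries
`-φ > 0` and diagonal `1 + (k - 1) φ²`. At an index where `u` is maximal the row equation bounds
`max u` above in terms of `min u`, and at an index where `u` is minimal it bounds `min u` below in
terms of `max u`. With `U = B₂` and `L = 2B₁ - B₂`, the excesses `max u - U` and `L - min u` then
each bound the other with ratio `-φ k / (γ + 1 + (k - 1) φ²) < 1`, so both are `≤ 0`. The same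
argument for the right-hand side `0` shows that `Ω` is nonsingular.
-/

open Matrix

open Finset

def ar1Neighbors {n : ℕ} (t : Fin n) : Finset (Fin n) :=
  {s | t.val + 1 = s.val ∨ s.val + 1 = t.val}

lemma ar1Lambda_mulVec_apply_s12 (n : ℕ) (φ : ℝ) (x : Fin n → ℝ) (t : Fin n) :
    (ar1Lambda n φ *ᵥ x) t = ar1Lambda n φ t t * x t - φ * ∑ s ∈ ar1Neighbors t, x s := by
  have hrow : ∀ s, ar1Lambda n φ t s * x s =
      (if t = s then ar1Lambda n φ t t * x s else 0) +
        if s ∈ ar1Neighbors t then -φ * x s else 0 := by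
    intro s
    by_cases hts : t = s
    · subst hts
      simp [ar1Neighbors]
    · simp [ar1Lambda, ar1Neighbors, hts]
  rw [mulVec, dotProduct, sum_congr rfl fun s _ => hrow s, sum_add_distrib, sum_ite_eq,
    ← sum_filter, mul_sum]
  simp [sub_eq_add_neg]

lemma card_ar1Neighbors {n : ℕ} (hn : 2 ≤ n) (t : Fin n) :
    #(ar1Neighbors t) = if t.val = 0 ∨ t.val = n - 1 then 1 else 2 := by
  split_ifs with h
  · rw [card_eq_one]
    refine ⟨⟨if t.val = 0 then 1 else n - 2, by split_ifs <;> omega⟩, ?_⟩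
    ext s
    simp only [ar1Neighbors, mem_filter, mem_univ, true_and, mem_singleton, Fin.ext_iff]
    split_ifs <;> omega
  · rw [card_eq_two]
    refine ⟨⟨t.val - 1, by omega⟩, ⟨t.val + 1, by omega⟩, Fin.ne_of_val_ne (by simp), ?_⟩
    ext s
    simp only [ar1Neighbors, mem_filter, mem_univ, true_and, mem_insert, mem_singleton,
      Fin.ext_iff]
    omega

lemma ar1Lambda_apply_self_s12 {n : ℕ} (hn : 2 ≤ n) (φ : ℝ) (t : Fin n) :
    ar1Lambda n φ t t = 1 + ((#(ar1Neighbors t) : ℝ) - 1) * φ ^ 2 := by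
  rw [card_ar1Neighbors hn]
  simp only [ar1Lambda, of_apply, if_true]
  split_ifs <;> norm_num

lemma ar1Lambda_mulVec_bounds {n : ℕ} (hn : 2 ≤ n) {φ : ℝ} (hφ : φ ≤ 0) {x : Fin n → ℝ}
    {m M : ℝ} (hm : ∀ s, m ≤ x s) (hM : ∀ s, x s ≤ M) (t : Fin n) :
    ∃ k : ℝ, 0 ≤ k ∧ k ≤ 2 ∧
      (1 + (k - 1) * φ ^ 2) * x t - φ * k * m ≤ (ar1Lambda n φ *ᵥ x) t ∧
      (ar1Lambda n φ *ᵥ x) t ≤ (1 + (k - 1) * φ ^ 2) * x t - φ * k * M := by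
  refine ⟨#(ar1Neighbors t), by positivity, ?_, ?_⟩
  · rw [card_ar1Neighbors hn]
    split_ifs <;> norm_num
  have hlo : #(ar1Neighbors t) * m ≤ ∑ s ∈ ar1Neighbors t, x s := by
    simpa using card_nsmul_le_sum _ _ m fun s _ => hm s
  have hhi : ∑ s ∈ ar1Neighbors t, x s ≤ #(ar1Neighbors t) * M := by
    simpa using sum_le_card_nsmul _ _ M fun s _ => hM s
  rw [ar1Lambda_mulVec_apply_s12, ar1Lambda_apply_self_s12 hn]
  constructor
  · linarith [mul_le_mul_of_nonpos_left hlo hφ]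
  · linarith [mul_le_mul_of_nonpos_left hhi hφ]

lemma nonpos_of_le_mul_of_le_mul {a b a' b' x y : ℝ} (hb : 0 ≤ b) (hba : b < a)
    (hb' : 0 ≤ b') (hba' : b' < a') (hx : a * x ≤ b * y) (hy : a' * y ≤ b' * x) :
    x ≤ 0 ∧ y ≤ 0 := by
  have key : ∀ {a b a' b' x y : ℝ}, 0 ≤ b → b < a → 0 ≤ b' → b' < a' →
      a * x ≤ b * y → a' * y ≤ b' * x → x ≤ 0 := by
    intro a b a' b' x y hb hba hb' hba' hx hy
    by_contra! hx0
    have : a' * (a * x) ≤ b * (b' * x) := by nlinarith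
    nlinarith [mul_lt_mul'' hba hba' hb hb']
  exact ⟨key hb hba hb' hba' hx hy, key hb' hba' hb hba hy hx⟩

section Bounds

variable {γ φ k : ℝ}

lemma ar1_row_supersolution (hγ : 0 < γ) (hφ0 : -1 < φ) (hφ1 : φ < 0) (hk : 0 ≤ k) :
    γ + φ * k * (2 * (γ / ((1 - φ) ^ 2 + γ)) - γ / (1 - φ ^ 2 + γ)) ≤
      (γ + 1 + (k - 1) * φ ^ 2) * (γ / (1 - φ ^ 2 + γ)) := by
  have hD₁ : 0 < (1 - φ) ^ 2 + γ := by positivity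
  have hD₂ : 0 < 1 - φ ^ 2 + γ := by nlinarith
  have hgap : (γ + 1 + (k - 1) * φ ^ 2) * (γ / (1 - φ ^ 2 + γ)) -
      (γ + φ * k * (2 * (γ / ((1 - φ) ^ 2 + γ)) - γ / (1 - φ ^ 2 + γ))) =
      k * (γ * (-φ) * (1 - φ) * (γ + (1 + φ) ^ 2)) / ((1 - φ ^ 2 + γ) * ((1 - φ) ^ 2 + γ)) := by
    field_simp
    ring
  have : 0 ≤ k * (γ * (-φ) * (1 - φ) * (γ + (1 + φ) ^ 2)) /
      ((1 - φ ^ 2 + γ) * ((1 - φ) ^ 2 + γ)) := by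
    have : 0 < -φ := by linarith
    have : 0 < 1 - φ := by linarith
    positivity
  linarith

lemma ar1_row_subsolution (hγ : 0 < γ) (hφ0 : -1 < φ) (hφ1 : φ < 0) (hk0 : 0 ≤ k)
    (hk2 : k ≤ 2) :
    (γ + 1 + (k - 1) * φ ^ 2) * (2 * (γ / ((1 - φ) ^ 2 + γ)) - γ / (1 - φ ^ 2 + γ)) ≤
      γ + φ * k * (γ / (1 - φ ^ 2 + γ)) := by
  have hD₁ : 0 < (1 - φ) ^ 2 + γ := by positivity
  have hD₂ : 0 < 1 - φ ^ 2 + γ := by nlinarith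
  have hgap : γ + φ * k * (γ / (1 - φ ^ 2 + γ)) -
      (γ + 1 + (k - 1) * φ ^ 2) * (2 * (γ / ((1 - φ) ^ 2 + γ)) - γ / (1 - φ ^ 2 + γ)) =
      γ * (-φ) * (1 - φ) * (2 * (2 - k) * (1 - φ ^ 2 + γ) + k * (γ + (1 + φ) ^ 2)) /
        ((1 - φ ^ 2 + γ) * ((1 - φ) ^ 2 + γ)) := by
    field_simp
    ring
  have : 0 ≤ γ * (-φ) * (1 - φ) * (2 * (2 - k) * (1 - φ ^ 2 + γ) + k * (γ + (1 + φ) ^ 2)) /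
      ((1 - φ ^ 2 + γ) * ((1 - φ) ^ 2 + γ)) := by
    have : 0 < -φ := by linarith
    have : 0 < 1 - φ := by linarith
    have : 0 ≤ 2 - k := by linarith
    positivity
  linarith

lemma ar1_row_contraction (hγ : 0 < γ) (hφ0 : -1 < φ) (hφ1 : φ < 0) (hk0 : 0 ≤ k)
    (hk2 : k ≤ 2) :
    0 ≤ -φ * k ∧ -φ * k < γ + 1 + (k - 1) * φ ^ 2 := by
  constructor
  · nlinarith
  · nlinarith [mul_nonneg hk0 (sq_nonneg (1 + φ)),
      mul_nonneg (sub_nonneg.2 hk2) (by nlinarith : (0 : ℝ) ≤ 1 - φ ^ 2)]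

theorem ar1_maximum_principle {n : ℕ} (hn : 2 ≤ n) (hγ : 0 < γ) (hφ0 : -1 < φ) (hφ1 : φ < 0)
    {r : ℝ} (hr : 0 ≤ r) {u : Fin n → ℝ}
    (hu : ∀ t, γ * u t + (ar1Lambda n φ *ᵥ u) t = γ * r) (t : Fin n) :
    r * (2 * (γ / ((1 - φ) ^ 2 + γ)) - γ / (1 - φ ^ 2 + γ)) ≤ u t ∧
      u t ≤ r * (γ / (1 - φ ^ 2 + γ)) := by
  have hne : (univ : Finset (Fin n)).Nonempty := ⟨⟨0, by omega⟩, mem_univ _⟩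
  obtain ⟨tM, -, hM⟩ := exists_max_image univ u hne
  obtain ⟨tm, -, hm⟩ := exists_min_image univ u hne
  have hM' : ∀ s, u s ≤ u tM := fun s => hM s (mem_univ s)
  have hm' : ∀ s, u tm ≤ u s := fun s => hm s (mem_univ s)
  obtain ⟨k, hk0, hk2, hrowM, -⟩ := ar1Lambda_mulVec_bounds hn hφ1.le hm' hM' tM
  obtain ⟨k', hk0', hk2', -, hrowm⟩ := ar1Lambda_mulVec_bounds hn hφ1.le hm' hM' tm
  have hsuper := mul_le_mul_of_nonneg_left (ar1_row_supersolution hγ hφ0 hφ1 hk0) hr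
  have hsub := mul_le_mul_of_nonneg_left (ar1_row_subsolution hγ hφ0 hφ1 hk0' hk2') hr
  obtain ⟨hcM, hcM'⟩ := ar1_row_contraction hγ hφ0 hφ1 hk0 hk2
  obtain ⟨hcm, hcm'⟩ := ar1_row_contraction hγ hφ0 hφ1 hk0' hk2'
  obtain ⟨hU, hL⟩ := nonpos_of_le_mul_of_le_mul hcM hcM' hcm hcm'
    (x := u tM - r * (γ / (1 - φ ^ 2 + γ)))
    (y := r * (2 * (γ / ((1 - φ) ^ 2 + γ)) - γ / (1 - φ ^ 2 + γ)) - u tm)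
    (by linarith [hu tM]) (by linarith [hu tm])
  exact ⟨by linarith [hm' t], by linarith [hM' t]⟩

lemma ar1_bound_constants_lt (hγ : 0 < γ) (hφ0 : -1 < φ) (hφ1 : φ < 0) :
    0 < γ / ((1 - φ) ^ 2 + γ) ∧ γ / ((1 - φ) ^ 2 + γ) < γ / (1 - φ ^ 2 + γ) ∧
      γ / (1 - φ ^ 2 + γ) < 1 := by
  have hD₂ : 0 < 1 - φ ^ 2 + γ := by nlinarith
  refine ⟨by positivity, div_lt_div_of_pos_left hγ hD₂ (by nlinarith), ?_⟩
  rw [div_lt_one hD₂]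
  nlinarith

end Bounds

/-- for `-1 < φ < 0`, every entry of `w^opt = 1 - σ_ε⁻² Ω⁻¹ 1`
satisfies `1 - B₂ ≤ w_t^opt ≤ 1 + B₂ - 2B₁`, with `B₁ = γ/((1-φ)²+γ)`,
`B₂ = γ/(1-φ²+γ)`; moreover `0 < B₁ < B₂ < 1`. -/
theorem stmt_12 (n : ℕ) (hn : 2 ≤ n) (φ γ : ℝ) (hφ0 : -1 < φ) (hφ1 : φ < 0)
    (σε ση : ℝ) (hσε : 0 < σε) (hση : 0 < ση) (hγ : γ = ση ^ 2 / σε ^ 2)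
    (Ω : Matrix (Fin n) (Fin n) ℝ)
    (hΩ : Ω = (σε ^ 2)⁻¹ • (1 : Matrix (Fin n) (Fin n) ℝ) + (ση ^ 2)⁻¹ • ar1Lambda n φ)
    (wopt : Fin n → ℝ)
    (hwopt : wopt = (1 : Fin n → ℝ) - (σε ^ 2)⁻¹ • (Ω⁻¹ *ᵥ (1 : Fin n → ℝ)))
    (B₁ B₂ : ℝ) (hB₁ : B₁ = γ / ((1 - φ) ^ 2 + γ)) (hB₂ : B₂ = γ / (1 - φ ^ 2 + γ)) :
    (∀ t : Fin n, 1 - B₂ ≤ wopt t ∧ wopt t ≤ 1 + B₂ - 2 * B₁) ∧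
    (0 < B₁ ∧ B₁ < B₂ ∧ B₂ < 1) := by
  have hγpos : 0 < γ := by rw [hγ]; positivity
  have hΩ_mulVec : ∀ v t, ση ^ 2 * (Ω *ᵥ v) t = γ * v t + (ar1Lambda n φ *ᵥ v) t := by
    intro v t
    simp only [hΩ, hγ, add_mulVec, smul_mulVec, one_mulVec, Pi.add_apply, Pi.smul_apply,
      smul_eq_mul]
    field_simp
  have hdet : Ω.det ≠ 0 := by
    rw [Ne, ← exists_mulVec_eq_zero_iff]
    rintro ⟨v, hv0, hv⟩
    refine hv0 (funext fun t => ?_)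
    have := ar1_maximum_principle hn hγpos hφ0 hφ1 le_rfl (u := v)
      (fun s => by rw [← hΩ_mulVec, hv, Pi.zero_apply, mul_zero, mul_zero]) t
    simp only [zero_mul] at this
    exact le_antisymm this.2 this.1
  have hu : Ω *ᵥ (1 - wopt) = (σε ^ 2)⁻¹ • 1 := by
    rw [hwopt, sub_sub_cancel, mulVec_smul, mulVec_mulVec,
      mul_nonsing_inv Ω (isUnit_iff_ne_zero.mpr hdet), one_mulVec]
  have hbounds := ar1_maximum_principle hn hγpos hφ0 hφ1 zero_le_one (u := 1 - wopt)
    fun t => by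
      rw [← hΩ_mulVec, hu, hγ]
      simp only [Pi.smul_apply, Pi.one_apply, smul_eq_mul, mul_one]
      field_simp
  refine ⟨fun t => ?_, hB₁ ▸ hB₂ ▸ ar1_bound_constants_lt hγpos hφ0 hφ1⟩
  obtain ⟨hlo, hhi⟩ := hbounds t
  simp only [Pi.sub_apply, Pi.one_apply, one_mul] at hlo hhi
  rw [hB₁, hB₂]
  constructor <;> linarith
end

section
/- Let μ ≠ 0 and define I(a, w̃) = (μ²a²/2) w̃ᵀΩw̃ + μa² zᵀw̃ - (2aμ/σ_η²) zᵀΩ^{-1}Λw̃ + n(1-a)² + (a²/2) zᵀΩ^{-1}z. Then the stationary-point equations ∂I/∂a = 0, ∂I/∂w̃ = 0 are solved by a^opt = 1 - (nσ_η²)^{-1} zᵀΩ^{-1}ΛΩ^{-1}z and w̃^opt = (μΩ)^{-1}{ 2ΛΩ^{-1}z/(a^opt σ_η²) - z }, provided a^opt ≠ 0. -/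
open Matrix

/-! The weight gradient `μ²a²Ωw̃ + μa²z - (2aμ/σ_η²)ΛΩ⁻¹z` vanishes for every `a ≠ 0` as soon as
`Ωw̃ = μ⁻¹(cΛΩ⁻¹z - z)` with `c = 2/(aσ_η²)`. Substituting this `w̃` into `∂I/∂a` collapses it to
`(2/σ_η²) zᵀΩ⁻¹ΛΩ⁻¹z - 2n(1 - a)`, which vanishes exactly at `a^opt`. Symmetry of `Λ` and `Ω` turns
`zᵀΩ⁻¹Λw̃` into `(ΛΩ⁻¹z)ᵀw̃`, and `Ω` is invertible because `Λ` is weakly diagonally dominant for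
`|φ| ≤ 1`, so adding `σ_ε⁻²I` makes `Ω` strictly diagonally dominant. -/

section DotProduct

variable {ι : Type*} [Fintype ι]

noncomputable def dotProductCLM (c : ι → ℝ) : (ι → ℝ) →L[ℝ] ℝ :=
  LinearMap.toContinuousLinearMap (dotProductBilin ℝ ℝ c)

@[simp] lemma dotProductCLM_apply (c v : ι → ℝ) : dotProductCLM c v = c ⬝ᵥ v := rfl

@[simp] lemma dotProductCLM_zero : dotProductCLM (0 : ι → ℝ) = 0 := by
  ext v
  simp

lemma Matrix.IsSymm.dotProduct_mulVec_comm {M : Matrix ι ι ℝ} (hM : M.IsSymm) (x y : ι → ℝ) :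
    x ⬝ᵥ (M *ᵥ y) = y ⬝ᵥ (M *ᵥ x) := by
  rw [dotProduct_mulVec, ← mulVec_transpose, hM.eq, dotProduct_comm]

lemma hasFDerivAt_dotProduct_mulVec_self {M : Matrix ι ι ℝ} (hM : M.IsSymm) (w : ι → ℝ) :
    HasFDerivAt (fun v => v ⬝ᵥ (M *ᵥ v)) ((2 : ℝ) • dotProductCLM (M *ᵥ w)) w := by
  have hterm : ∀ i, HasFDerivAt (fun v : ι → ℝ => v i * (M i ⬝ᵥ v))
      (w i • dotProductCLM (M i) + (M i ⬝ᵥ w) • ContinuousLinearMap.proj i) w :=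
    fun i => (ContinuousLinearMap.proj i).hasFDerivAt.mul (dotProductCLM (M i)).hasFDerivAt
  refine (HasFDerivAt.fun_sum fun i _ => hterm i).congr_fderiv ?_
  ext v
  simp only [Finset.sum_add_distrib, _root_.add_apply, FunLike.coe_sum, Finset.sum_apply,
    _root_.smul_apply, dotProductCLM_apply, ContinuousLinearMap.proj_apply, smul_eq_mul]
  show w ⬝ᵥ (M *ᵥ v) + (M *ᵥ w) ⬝ᵥ v = 2 * ((M *ᵥ w) ⬝ᵥ v)
  rw [hM.dotProduct_mulVec_comm, dotProduct_comm]
  ring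

end DotProduct

open Finset in
lemma Matrix.det_smul_one_add_smul_ne_zero {ι : Type*} [Fintype ι] [DecidableEq ι]
    {M : Matrix ι ι ℝ} (hM : ∀ k, ∑ j ∈ univ.erase k, ‖M k j‖ ≤ M k k) {c d : ℝ} (hc : 0 < c)
    (hd : 0 ≤ d) : (c • (1 : Matrix ι ι ℝ) + d • M).det ≠ 0 := by
  refine det_ne_zero_of_sum_row_lt_diag fun k => ?_
  have hoff : ∀ j ∈ univ.erase k, ‖(c • 1 + d • M) k j‖ = d * ‖M k j‖ := fun j hj => by
    simp [one_apply_ne' (ne_of_mem_erase hj), abs_of_nonneg hd]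
  have hdiag : 0 ≤ M k k := (sum_nonneg fun j _ => norm_nonneg _).trans (hM k)
  rw [sum_congr rfl hoff, ← mul_sum]
  simp only [add_apply, smul_apply, one_apply_eq, smul_eq_mul, mul_one]
  rw [Real.norm_of_nonneg (by positivity)]
  nlinarith [mul_le_mul_of_nonneg_left (hM k) hd]

lemma sum_boole_le_one {ι : Type*} [Fintype ι] {p : ι → Prop} [DecidablePred p]
    (hp : ∀ i j, p i → p j → i = j) : ∑ i, (if p i then (1 : ℝ) else 0) ≤ 1 := by
  rw [Finset.sum_boole, Nat.cast_le_one]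
  exact Finset.card_le_one.mpr fun i hi j hj => hp i j (by simpa using hi) (by simpa using hj)

lemma isSymm_ar1Lambda (n : ℕ) (φ : ℝ) : (ar1Lambda n φ).IsSymm := by
  refine IsSymm.ext fun i j => ?_
  by_cases h : i = j
  · rw [h]
  · simp [ar1Lambda, h, Ne.symm h, or_comm]

open Finset in
lemma sum_norm_ar1Lambda_offDiag_le {n : ℕ} {φ : ℝ} (hφ : |φ| ≤ 1) (k : Fin n) :
    ∑ j ∈ univ.erase k, ‖ar1Lambda n φ k j‖ ≤ ar1Lambda n φ k k := by
  set below := ∑ j : Fin n, if j.val + 1 = k.val then (1 : ℝ) else 0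
  set above := ∑ j : Fin n, if k.val + 1 = j.val then (1 : ℝ) else 0
  have hbelow : below ≤ 1 := sum_boole_le_one fun i j hi hj => Fin.ext (by omega)
  have habove : above ≤ 1 := sum_boole_le_one fun i j hi hj => Fin.ext (by omega)
  have hrow : ∑ j ∈ univ.erase k, ‖ar1Lambda n φ k j‖ ≤ |φ| * (below + above) := by
    rw [← sum_add_distrib, mul_sum]
    refine (sum_le_sum fun j hj => ?_).trans
      (sum_le_sum_of_subset_of_nonneg (erase_subset k univ) fun j _ _ => by positivity)
    simp only [ar1Lambda, of_apply, if_neg (ne_of_mem_erase hj).symm]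
    split_ifs <;> first | omega | simp
  refine hrow.trans ?_
  have hφ0 := abs_nonneg φ
  by_cases hk : k.val = 0 ∨ k.val = n - 1
  · have hedge : below + above ≤ 1 := by
      rcases hk with h | h
      · have : below = 0 := sum_eq_zero fun j _ => if_neg (by omega)
        linarith
      · have : above = 0 := sum_eq_zero fun j _ => if_neg (by omega)
        linarith
    simp only [ar1Lambda, of_apply, if_true, if_pos hk]
    nlinarith
  · simp only [ar1Lambda, of_apply, if_true, if_neg hk]
    nlinarith [sq_abs φ, sq_nonneg (|φ| - 1)]

section AugmentedInformation

variable {ι : Type*} [Fintype ι] [DecidableEq ι]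
variable (μ ση : ℝ) (Ω Λ : Matrix ι ι ℝ) (z : ι → ℝ)

noncomputable def augmentedInfo (q : ℝ × (ι → ℝ)) : ℝ :=
  μ ^ 2 * q.1 ^ 2 / 2 * (q.2 ⬝ᵥ (Ω *ᵥ q.2)) + μ * q.1 ^ 2 * (z ⬝ᵥ q.2)
    - 2 * q.1 * μ / ση ^ 2 * (z ⬝ᵥ (Ω⁻¹ *ᵥ (Λ *ᵥ q.2))) + Fintype.card ι * (1 - q.1) ^ 2
    + q.1 ^ 2 / 2 * (z ⬝ᵥ (Ω⁻¹ *ᵥ z))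

noncomputable def augmentedInfoDerivScale (a : ℝ) (w : ι → ℝ) : ℝ :=
  μ ^ 2 * a * (w ⬝ᵥ (Ω *ᵥ w)) + 2 * μ * a * (z ⬝ᵥ w)
    - 2 * μ / ση ^ 2 * ((Λ *ᵥ (Ω⁻¹ *ᵥ z)) ⬝ᵥ w) - 2 * Fintype.card ι * (1 - a)
    + a * (z ⬝ᵥ (Ω⁻¹ *ᵥ z))

noncomputable def augmentedInfoGradWeights (a : ℝ) (w : ι → ℝ) : ι → ℝ :=
  (μ ^ 2 * a ^ 2) • (Ω *ᵥ w) + (μ * a ^ 2) • z - (2 * a * μ / ση ^ 2) • (Λ *ᵥ (Ω⁻¹ *ᵥ z))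

variable {Ω Λ}

lemma dotProduct_inv_mulVec_mulVec (hΩ : Ω.IsSymm) (hΛ : Λ.IsSymm) (w : ι → ℝ) :
    z ⬝ᵥ (Ω⁻¹ *ᵥ (Λ *ᵥ w)) = (Λ *ᵥ (Ω⁻¹ *ᵥ z)) ⬝ᵥ w := by
  rw [hΩ.inv.dotProduct_mulVec_comm, dotProduct_comm, hΛ.dotProduct_mulVec_comm, dotProduct_comm]

lemma hasFDerivAt_augmentedInfo (hΩ : Ω.IsSymm) (hΛ : Λ.IsSymm) (a : ℝ) (w : ι → ℝ) :
    HasFDerivAt (augmentedInfo μ ση Ω Λ z)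
      (augmentedInfoDerivScale μ ση Ω Λ z a w • ContinuousLinearMap.fst ℝ ℝ (ι → ℝ)
        + (dotProductCLM (augmentedInfoGradWeights μ ση Ω Λ z a w)).comp
          (ContinuousLinearMap.snd ℝ ℝ (ι → ℝ))) (a, w) := by
  have hscale : HasFDerivAt (fun q : ℝ × (ι → ℝ) => q.1)
      (ContinuousLinearMap.fst ℝ ℝ (ι → ℝ)) (a, w) :=
    hasFDerivAt_fst
  have hlin : ∀ c : ι → ℝ, HasFDerivAt (fun q : ℝ × (ι → ℝ) => c ⬝ᵥ q.2)
      ((dotProductCLM c).comp (ContinuousLinearMap.snd ℝ ℝ (ι → ℝ))) (a, w) :=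
    fun c => ((dotProductCLM c).comp (ContinuousLinearMap.snd ℝ ℝ (ι → ℝ))).hasFDerivAt
  have hquad : HasFDerivAt (fun q : ℝ × (ι → ℝ) => q.2 ⬝ᵥ (Ω *ᵥ q.2))
      (((2 : ℝ) • dotProductCLM (Ω *ᵥ w)).comp (ContinuousLinearMap.snd ℝ ℝ (ι → ℝ))) (a, w) :=
    (hasFDerivAt_dotProduct_mulVec_self hΩ w).comp (f := Prod.snd) (a, w) hasFDerivAt_snd
  have hsq := hscale.pow 2
  have hsum := (((hsq.const_mul (μ ^ 2 / 2)).mul hquad).add ((hsq.const_mul μ).mul (hlin z))).sub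
      ((hscale.const_mul (2 * μ / ση ^ 2)).mul (hlin (Λ *ᵥ (Ω⁻¹ *ᵥ z)))) |>.add
      (((hscale.const_sub 1).pow 2).const_mul (Fintype.card ι : ℝ)) |>.add
      (hsq.const_mul ((z ⬝ᵥ (Ω⁻¹ *ᵥ z)) / 2))
  refine (hsum.congr_fderiv ?_).congr_of_eventuallyEq (.of_forall fun q => ?_)
  · refine ContinuousLinearMap.ext fun ⟨s, v⟩ => ?_
    simp only [augmentedInfoDerivScale, augmentedInfoGradWeights, ContinuousLinearMap.smul_comp,
      ContinuousLinearMap.comp_apply, ContinuousLinearMap.coe_fst', ContinuousLinearMap.coe_snd',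
      _root_.add_apply, _root_.sub_apply, _root_.smul_apply, _root_.neg_apply, dotProductCLM_apply,
      add_dotProduct, sub_dotProduct, smul_dotProduct, smul_eq_mul, nsmul_eq_mul]
    ring
  · simp only [augmentedInfo, dotProduct_inv_mulVec_mulVec z hΩ hΛ, Pi.add_apply, Pi.sub_apply,
      Pi.mul_apply]
    ring

end AugmentedInformation

section Stationarity

variable {ι : Type*} [Fintype ι] [DecidableEq ι]
variable (μ ση : ℝ) (Ω Λ : Matrix ι ι ℝ) (z : ι → ℝ)

noncomputable def optimalWeights (a : ℝ) : ι → ℝ :=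
  (μ • Ω)⁻¹ *ᵥ ((2 / (a * ση ^ 2)) • (Λ *ᵥ (Ω⁻¹ *ᵥ z)) - z)

noncomputable def optimalScale : ℝ :=
  1 - (Fintype.card ι * ση ^ 2)⁻¹ * (z ⬝ᵥ (Ω⁻¹ *ᵥ (Λ *ᵥ (Ω⁻¹ *ᵥ z))))

variable {μ ση Ω Λ}

lemma optimalWeights_eq (hμ : μ ≠ 0) (hΩ : IsUnit Ω.det) (a : ℝ) :
    optimalWeights μ ση Ω Λ z a = μ⁻¹ • (Ω⁻¹ *ᵥ ((2 / (a * ση ^ 2)) • (Λ *ᵥ (Ω⁻¹ *ᵥ z)) - z)) := by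
  let := invertibleOfNonzero hμ
  rw [optimalWeights, Matrix.inv_smul Ω μ hΩ, invOf_eq_inv, smul_mulVec]

lemma mulVec_optimalWeights (hμ : μ ≠ 0) (hΩ : IsUnit Ω.det) (a : ℝ) :
    Ω *ᵥ optimalWeights μ ση Ω Λ z a = μ⁻¹ • ((2 / (a * ση ^ 2)) • (Λ *ᵥ (Ω⁻¹ *ᵥ z)) - z) := by
  rw [optimalWeights_eq z hμ hΩ, mulVec_smul, mulVec_mulVec, mul_nonsing_inv Ω hΩ, one_mulVec]

lemma augmentedInfoGradWeights_optimalWeights (hμ : μ ≠ 0) (hση : ση ≠ 0) (hΩ : IsUnit Ω.det)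
    {a : ℝ} (ha : a ≠ 0) :
    augmentedInfoGradWeights μ ση Ω Λ z a (optimalWeights μ ση Ω Λ z a) = 0 := by
  rw [augmentedInfoGradWeights, mulVec_optimalWeights z hμ hΩ]
  ext i
  simp only [Pi.add_apply, Pi.sub_apply, Pi.smul_apply, smul_eq_mul, Pi.zero_apply]
  field_simp
  ring

lemma augmentedInfoDerivScale_optimalScale (hμ : μ ≠ 0) (hση : ση ≠ 0) (hΩ : IsUnit Ω.det)
    (hι : Fintype.card ι ≠ 0) (ha : optimalScale ση Ω Λ z ≠ 0) :
    augmentedInfoDerivScale μ ση Ω Λ z (optimalScale ση Ω Λ z)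
      (optimalWeights μ ση Ω Λ z (optimalScale ση Ω Λ z)) = 0 := by
  set a := optimalScale ση Ω Λ z with ha_def
  set w := optimalWeights μ ση Ω Λ z a
  set ℓ := Λ *ᵥ (Ω⁻¹ *ᵥ z) with hℓ
  set c := 2 / (a * ση ^ 2) with hc
  have hquad : w ⬝ᵥ (Ω *ᵥ w) = μ⁻¹ * (c * (ℓ ⬝ᵥ w) - z ⬝ᵥ w) := by
    rw [mulVec_optimalWeights z hμ hΩ, dotProduct_smul, dotProduct_sub, dotProduct_smul,
      dotProduct_comm w, dotProduct_comm w, smul_eq_mul, smul_eq_mul]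
  have hlin : z ⬝ᵥ w = μ⁻¹ * (c * (z ⬝ᵥ (Ω⁻¹ *ᵥ ℓ)) - z ⬝ᵥ (Ω⁻¹ *ᵥ z)) := by
    rw [show w = _ from optimalWeights_eq z hμ hΩ a, dotProduct_smul, mulVec_sub, mulVec_smul,
      dotProduct_sub, dotProduct_smul, smul_eq_mul, smul_eq_mul]
  have hscale : (Fintype.card ι : ℝ) * (1 - a) = (ση ^ 2)⁻¹ * (z ⬝ᵥ (Ω⁻¹ *ᵥ ℓ)) := by
    rw [ha_def, optimalScale]
    field_simp
    ring
  rw [augmentedInfoDerivScale, hquad, hlin, mul_assoc 2 (Fintype.card ι : ℝ), hscale, hc, hℓ]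
  field_simp
  ring

end Stationarity

/-- for `μ ≠ 0`, the augmented information
`I(a, w̃) = (μ²a²/2) w̃ᵀΩw̃ + μa² zᵀw̃ - (2aμ/σ_η²) zᵀΩ⁻¹Λw̃ + n(1-a)² + (a²/2) zᵀΩ⁻¹z`
has a stationary point (total derivative zero, i.e. `∂I/∂a = 0` and `∂I/∂w̃ = 0`)
at `a^opt = 1 - (nσ_η²)⁻¹ zᵀΩ⁻¹ΛΩ⁻¹z`,
`w̃^opt = (μΩ)⁻¹ (2ΛΩ⁻¹z/(a^opt σ_η²) - z)`, provided `a^opt ≠ 0`. -/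
theorem stmt_16 (n : ℕ) (hn : 1 ≤ n) (φ : ℝ) (hφ : |φ| < 1)
    (σε ση μ : ℝ) (hσε : 0 < σε) (hση : 0 < ση) (hμ : μ ≠ 0)
    (z : Fin n → ℝ)
    (Λ : Matrix (Fin n) (Fin n) ℝ) (hΛ : Λ = ar1Lambda n φ)
    (Ω : Matrix (Fin n) (Fin n) ℝ)
    (hΩ : Ω = (σε ^ 2)⁻¹ • (1 : Matrix (Fin n) (Fin n) ℝ) + (ση ^ 2)⁻¹ • Λ)
    (Ifun : ℝ × (Fin n → ℝ) → ℝ)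
    (hI : ∀ a wt, Ifun (a, wt) = μ ^ 2 * a ^ 2 / 2 * (wt ⬝ᵥ (Ω *ᵥ wt))
        + μ * a ^ 2 * (z ⬝ᵥ wt) - 2 * a * μ / ση ^ 2 * (z ⬝ᵥ (Ω⁻¹ *ᵥ (Λ *ᵥ wt)))
        + n * (1 - a) ^ 2 + a ^ 2 / 2 * (z ⬝ᵥ (Ω⁻¹ *ᵥ z)))
    (aopt : ℝ)
    (haopt : aopt = 1 - (n * ση ^ 2)⁻¹ * (z ⬝ᵥ (Ω⁻¹ *ᵥ (Λ *ᵥ (Ω⁻¹ *ᵥ z)))))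
    (ha0 : aopt ≠ 0)
    (wtopt : Fin n → ℝ)
    (hwtopt : wtopt = (μ • Ω)⁻¹ *ᵥ
        ((2 / (aopt * ση ^ 2)) • (Λ *ᵥ (Ω⁻¹ *ᵥ z)) - z)) :
    fderiv ℝ Ifun (aopt, wtopt) = 0 := by
  have hΛs : Λ.IsSymm := hΛ ▸ isSymm_ar1Lambda n φ
  have hΩs : Ω.IsSymm := hΩ ▸ (isSymm_one.smul _).add (hΛs.smul _)
  have hΩdet : IsUnit Ω.det := by
    rw [isUnit_iff_ne_zero, hΩ, hΛ]
    exact det_smul_one_add_smul_ne_zero (sum_norm_ar1Lambda_offDiag_le hφ.le) (by positivity)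
      (by positivity)
  have hcard : Fintype.card (Fin n) ≠ 0 := by rw [Fintype.card_fin]; omega
  have hIfun : Ifun = augmentedInfo μ ση Ω Λ z := funext fun ⟨a, w⟩ => by
    rw [hI, augmentedInfo, Fintype.card_fin]
  obtain rfl : aopt = optimalScale ση Ω Λ z := by rw [haopt, optimalScale, Fintype.card_fin]
  obtain rfl : wtopt = optimalWeights μ ση Ω Λ z _ := hwtopt
  rw [hIfun, (hasFDerivAt_augmentedInfo μ ση z hΩs hΛs _ _).fderiv,
    augmentedInfoGradWeights_optimalWeights z hμ hση.ne' hΩdet ha0,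
    augmentedInfoDerivScale_optimalScale z hμ hση.ne' hΩdet hcard ha0]
  simp
end
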